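/- arXiv:1811.06951 — 6 statements merged into one kernel-verified Lean document; each statement's English description precedes it below -/
import Mathlib

section
/- For every φ in V([0,∞]) and all real numbers p₁ ≥ p₂ ≥ 0, one has |H¹_φ(p₁,p₂)| ≤ 10 · p₁ · p₂ · ‖φ‖_V. -/
open Filter Topology

noncomputable section

/-- The functional `H¹_φ(p₁,p₂)`. -/
def H1 (φ : ℝ → ℝ) (p₁ p₂ : ℝ) : ℝ :=
  (p₁ + p₂) ^ 3 * φ (p₁ + p₂) - 2 * (p₁ ^ 3 + p₁ * p₂ ^ 2) * φ p₁
    - 4 * p₁ * p₂ ^ 2 * φ p₂ + (p₁ - p₂) ^ 3 * φ (p₁ - p₂)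

/-- The functional `H²_φ(p₁,p₂)`. -/
def H2 (φ : ℝ → ℝ) (p₁ p₂ : ℝ) : ℝ :=
  (p₁ + p₂) ^ 2 * ((p₁ + p₂) * φ (p₁ + p₂) - p₁ * φ p₁ - p₂ * φ p₂)

/-- Membership in the space `V([0,∞])`: `φ` is continuous on `[0,∞)` with a finite limit
at `∞`, `φ'` is a derivative of `φ` off an exceptional locally finite set `S`
(piecewise continuity), `p² φ'(p)` is bounded, and `sup p₂ |φ(p₁+p₂) - φ(p₁)| < ∞`. -/
structure MemV (φ φ' : ℝ → ℝ) (S : Set ℝ) : Prop where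
  cont : ContinuousOn φ (Set.Ici 0)
  tendsto_atTop : ∃ L : ℝ, Tendsto φ atTop (𝓝 L)
  S_locFinite : ∀ a b : ℝ, (S ∩ Set.Icc a b).Finite
  hasDeriv : ∀ p ∈ Set.Ici (0 : ℝ) \ S, HasDerivWithinAt φ (φ' p) (Set.Ici 0) p
  deriv_cont : ContinuousOn φ' (Set.Ici 0 \ S)
  bdd1 : BddAbove ((fun p => |φ p|) '' Set.Ici 0)
  bdd2 : BddAbove ((fun p => p ^ 2 * |φ' p|) '' Set.Ici 0)
  bdd3 : BddAbove {x : ℝ | ∃ p₁ p₂ : ℝ, 0 ≤ p₂ ∧ p₂ ≤ p₁ ∧ x = p₂ * |φ (p₁ + p₂) - φ p₁|}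

/-- The norm `‖φ‖_V = ‖φ‖_∞ + ‖p²φ'‖_∞ + sup_{p₁ ≥ p₂ ≥ 0} p₂ |φ(p₁+p₂)-φ(p₁)|`. -/
def normV (φ φ' : ℝ → ℝ) : ℝ :=
  sSup ((fun p => |φ p|) '' Set.Ici 0)
    + sSup ((fun p => p ^ 2 * |φ' p|) '' Set.Ici 0)
    + sSup {x : ℝ | ∃ p₁ p₂ : ℝ, 0 ≤ p₂ ∧ p₂ ≤ p₁ ∧ x = p₂ * |φ (p₁ + p₂) - φ p₁|}

/-! Writing `H¹_φ(p₁,p₂)` as `(p₁+p₂)³ (φ(p₁+p₂) - φ(p₁)) + (p₁-p₂)³ (φ(p₁-p₂) - φ(p₁))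
+ 4 p₁ p₂² (φ(p₁) - φ(p₂))`, each difference is controlled by the weighted derivative bound
`|φ'(x)| ≤ M / x²` alone: integrating it gives `c d |φ(d) - φ(c)| ≤ M (d - c)` for `0 ≤ c ≤ d`,
and the three terms are then at most `4`, `1` and `4` times `p₁ p₂ M`. -/

open MeasureTheory intervalIntegral Set

def weightedDerivNorm (φ' : ℝ → ℝ) : ℝ :=
  sSup ((fun p => p ^ 2 * |φ' p|) '' Ici 0)

theorem weightedDerivNorm_le_normV (φ φ' : ℝ → ℝ) : weightedDerivNorm φ' ≤ normV φ φ' := by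
  have h₀ : 0 ≤ sSup ((fun p => |φ p|) '' Ici 0) :=
    Real.sSup_nonneg (by rintro _ ⟨p, -, rfl⟩; positivity)
  have h₂ : 0 ≤ sSup {x : ℝ | ∃ p₁ p₂ : ℝ, 0 ≤ p₂ ∧ p₂ ≤ p₁ ∧ x = p₂ * |φ (p₁ + p₂) - φ p₁|} :=
    Real.sSup_nonneg (by rintro _ ⟨p₁, p₂, hp₂, -, rfl⟩; positivity)
  unfold normV weightedDerivNorm
  linarith

theorem integral_const_mul_inv_sq {c d : ℝ} (M : ℝ) (hc : 0 < c) (hcd : c ≤ d) :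
    ∫ x in c..d, M * (x ^ 2)⁻¹ = M * (c⁻¹ - d⁻¹) := by
  have hpos : ∀ x ∈ uIcc c d, 0 < x := by
    rw [uIcc_of_le hcd]; exact fun x hx => hc.trans_le hx.1
  have hderiv : ∀ x ∈ uIcc c d, HasDerivAt (fun y => -M * y⁻¹) (M * (x ^ 2)⁻¹) x := by
    intro x hx
    exact ((hasDerivAt_inv (hpos x hx).ne').const_mul (-M)).congr_deriv (by ring)
  have hcont : ContinuousOn (fun x : ℝ => M * (x ^ 2)⁻¹) (uIcc c d) :=
    continuousOn_const.mul <| (continuousOn_pow 2).inv₀ fun x hx => (pow_pos (hpos x hx) 2).ne'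
  rw [integral_eq_sub_of_hasDerivAt hderiv hcont.intervalIntegrable]
  ring

/-- `x² |f'(x)| ≤ M` makes `f ∘ (·)⁻¹` `M`-Lipschitz; this is that fact on `[c, d]`, with the
denominators cleared. -/
theorem mul_mul_abs_sub_le_of_sq_mul_abs_deriv_le {f f' : ℝ → ℝ} {s : Set ℝ} {c d M : ℝ}
    (hs : s.Countable) (hc : 0 < c) (hcd : c ≤ d) (hf : ContinuousOn f (Icc c d))
    (hf' : ∀ x ∈ Ioo c d \ s, HasDerivAt f (f' x) x)
    (hbound : ∀ x ∈ Icc c d, x ^ 2 * |f' x| ≤ M) :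
    c * d * |f d - f c| ≤ M * (d - c) := by
  have hg : IntervalIntegrable (fun x : ℝ => M * (x ^ 2)⁻¹) volume c d := by
    refine ContinuousOn.intervalIntegrable (continuousOn_const.mul ((continuousOn_pow 2).inv₀ ?_))
    rw [uIcc_of_le hcd]
    exact fun x hx => (pow_pos (hc.trans_le hx.1) 2).ne'
  have hle : ∀ x ∈ Ioc c d, ‖f' x‖ ≤ M * (x ^ 2)⁻¹ := by
    intro x hx
    have hx2 : 0 < x ^ 2 := pow_pos (hc.trans hx.1) 2
    rw [Real.norm_eq_abs, ← div_eq_mul_inv, le_div_iff₀ hx2, mul_comm]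
    exact hbound x (Ioc_subset_Icc_self hx)
  have hmeas : AEStronglyMeasurable f' (volume.restrict (uIoc c d)) := by
    refine (measurable_deriv f).aestronglyMeasurable.congr ?_
    rw [uIoc_of_le hcd]
    filter_upwards [ae_restrict_mem measurableSet_Ioc,
      ae_restrict_of_ae ((hs.insert d).ae_notMem volume)] with x hx hxs
    rw [mem_insert_iff, not_or] at hxs
    exact (hf' x ⟨⟨hx.1, hx.2.lt_of_ne hxs.1⟩, hxs.2⟩).deriv
  have hint : IntervalIntegrable f' volume c d := by
    refine hg.mono_fun hmeas ?_
    rw [uIoc_of_le hcd]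
    filter_upwards [ae_restrict_mem measurableSet_Ioc] with x hx
    exact (hle x hx).trans (le_abs_self _)
  have hdiff : |f d - f c| ≤ M * (c⁻¹ - d⁻¹) := by
    rw [← integral_eq_of_hasDerivAt_off_countable_of_le f f' hcd hs hf hf' hint,
      ← integral_const_mul_inv_sq M hc hcd]
    exact norm_integral_le_of_norm_le hcd (Eventually.of_forall hle) hg
  have hd : 0 < d := hc.trans_le hcd
  calc c * d * |f d - f c| ≤ c * d * (M * (c⁻¹ - d⁻¹)) := by gcongr
    _ = M * (d - c) := by field_simp

theorem MemV.mul_mul_abs_sub_le {φ φ' : ℝ → ℝ} {S : Set ℝ} (hφ : MemV φ φ' S) {c d : ℝ}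
    (hc : 0 ≤ c) (hcd : c ≤ d) :
    c * d * |φ d - φ c| ≤ weightedDerivNorm φ' * (d - c) := by
  have hbound : ∀ x ∈ Ici (0 : ℝ), x ^ 2 * |φ' x| ≤ weightedDerivNorm φ' :=
    fun x hx => le_csSup hφ.bdd2 ⟨x, hx, rfl⟩
  rcases hc.eq_or_lt with rfl | hc
  · simpa using mul_nonneg (hbound 0 self_mem_Ici |>.trans' (by simp)) (hcd : (0 : ℝ) ≤ d)
  refine mul_mul_abs_sub_le_of_sq_mul_abs_deriv_le ((hφ.S_locFinite c d).countable) hc hcd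
    (hφ.cont.mono fun x hx => hc.le.trans hx.1) (fun x hx => ?_)
    (fun x hx => hbound x (hc.le.trans hx.1))
  have hx₀ : 0 < x := hc.trans hx.1.1
  have hxS : x ∉ S := fun h => hx.2 ⟨h, Ioo_subset_Icc_self hx.1⟩
  exact (hφ.hasDeriv x ⟨hx₀.le, hxS⟩).hasDerivAt (Ici_mem_nhds hx₀)

theorem H1_eq (φ : ℝ → ℝ) (p₁ p₂ : ℝ) :
    H1 φ p₁ p₂ = (p₁ + p₂) ^ 3 * (φ (p₁ + p₂) - φ p₁)
      + (p₁ - p₂) ^ 3 * (φ (p₁ - p₂) - φ p₁) + 4 * p₁ * p₂ ^ 2 * (φ p₁ - φ p₂) := by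
  unfold H1
  ring

theorem abs_H1_le_of_mul_mul_abs_sub_le {φ : ℝ → ℝ} {M : ℝ}
    (hφ : ∀ c d, 0 ≤ c → c ≤ d → c * d * |φ d - φ c| ≤ M * (d - c))
    {p₁ p₂ : ℝ} (hp₂ : 0 ≤ p₂) (hp : p₂ ≤ p₁) :
    |H1 φ p₁ p₂| ≤ 9 * p₁ * p₂ * M := by
  have hM : 0 ≤ M := by simpa using hφ 0 1 le_rfl zero_le_one
  rcases (hp₂.trans hp).eq_or_lt with rfl | hp₁
  · obtain rfl : p₂ = 0 := le_antisymm hp hp₂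
    simp [H1]
  have h₁ : (p₁ + p₂) ^ 3 * |φ (p₁ + p₂) - φ p₁| ≤ 4 * p₁ * p₂ * M := by
    have h := hφ p₁ (p₁ + p₂) hp₁.le (by linarith)
    rw [add_sub_cancel_left] at h
    refine le_of_mul_le_mul_left ?_ hp₁
    calc p₁ * ((p₁ + p₂) ^ 3 * |φ (p₁ + p₂) - φ p₁|)
        = (p₁ + p₂) ^ 2 * (p₁ * (p₁ + p₂) * |φ (p₁ + p₂) - φ p₁|) := by ring
      _ ≤ (2 * p₁) ^ 2 * (M * p₂) := by gcongr; linarith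
      _ = p₁ * (4 * p₁ * p₂ * M) := by ring
  have h₂ : (p₁ - p₂) ^ 3 * |φ (p₁ - p₂) - φ p₁| ≤ p₁ * p₂ * M := by
    have h := hφ (p₁ - p₂) p₁ (by linarith) (by linarith)
    rw [sub_sub_cancel, abs_sub_comm] at h
    refine le_of_mul_le_mul_left ?_ hp₁
    calc p₁ * ((p₁ - p₂) ^ 3 * |φ (p₁ - p₂) - φ p₁|)
        = (p₁ - p₂) ^ 2 * ((p₁ - p₂) * p₁ * |φ (p₁ - p₂) - φ p₁|) := by ring
      _ ≤ p₁ ^ 2 * (M * p₂) := by gcongr; linarith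
      _ = p₁ * (p₁ * p₂ * M) := by ring
  have h₃ : 4 * p₁ * p₂ ^ 2 * |φ p₁ - φ p₂| ≤ 4 * p₁ * p₂ * M := by
    have h := hφ p₂ p₁ hp₂ hp
    calc 4 * p₁ * p₂ ^ 2 * |φ p₁ - φ p₂| = 4 * p₂ * (p₂ * p₁ * |φ p₁ - φ p₂|) := by ring
      _ ≤ 4 * p₂ * (M * (p₁ - p₂)) := by gcongr
      _ ≤ 4 * p₂ * (M * p₁) := by gcongr; linarith
      _ = 4 * p₁ * p₂ * M := by ring
  rw [H1_eq]
  refine (abs_add_three _ _ _).trans ?_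
  rw [abs_mul, abs_mul, abs_mul, abs_of_nonneg (by positivity : (0 : ℝ) ≤ (p₁ + p₂) ^ 3),
    abs_of_nonneg (pow_nonneg (sub_nonneg.2 hp) 3),
    abs_of_nonneg (by positivity : (0 : ℝ) ≤ 4 * p₁ * p₂ ^ 2)]
  linarith

/-- For every `φ ∈ V([0,∞])` and all `p₁ ≥ p₂ ≥ 0`,
`|H¹_φ(p₁,p₂)| ≤ 10 p₁ p₂ ‖φ‖_V`. -/
theorem statement0 (φ φ' : ℝ → ℝ) (S : Set ℝ) (hφ : MemV φ φ' S)
    (p₁ p₂ : ℝ) (hp₂ : 0 ≤ p₂) (hp : p₂ ≤ p₁) :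
    |H1 φ p₁ p₂| ≤ 10 * p₁ * p₂ * normV φ φ' := by
  have hW : 0 ≤ weightedDerivNorm φ' := by
    simpa using hφ.mul_mul_abs_sub_le le_rfl zero_le_one
  have hp₁₂ : 0 ≤ p₁ * p₂ := mul_nonneg (hp₂.trans hp) hp₂
  calc |H1 φ p₁ p₂| ≤ 9 * p₁ * p₂ * weightedDerivNorm φ' :=
        abs_H1_le_of_mul_mul_abs_sub_le (fun c d hc hcd => hφ.mul_mul_abs_sub_le hc hcd) hp₂ hp
    _ ≤ 10 * p₁ * p₂ * normV φ φ' := by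
        have := weightedDerivNorm_le_normV φ φ'
        nlinarith
end
end

section
/- The space V([0,∞]) is dense, with respect to the supremum norm, in the space C([0,∞]) of continuous functions on [0,∞) admitting a finite limit at ∞; moreover, every function in C_c([0,∞)) (continuous with compact support in [0,∞)) can be approximated in the supremum norm by elements of W([0,∞)). -/
open Filter Topology

noncomputable section

/-- Membership in `W([0,∞))`: the span of `{p ↦ p·φ(p) : φ ∈ V([0,∞])}` together with the
constant function `1`; since `V` is a vector space, every element of `W` has the form
`p ↦ c + p·φ(p)` with `φ ∈ V`. -/
def MemW (ψ : ℝ → ℝ) : Prop :=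
  ∃ (c : ℝ) (φ φ' : ℝ → ℝ) (S : Set ℝ), MemV φ φ' S ∧ ∀ p : ℝ, 0 ≤ p → ψ p = c + p * φ p

/-!
Under `x = e^{-p}` the half-line `[0, ∞]` becomes `[0, 1]`, so by Weierstrass the polynomials in
`e^{-p}` are dense in `C([0, ∞])`; they lie in `V`, the bound on `p² φ'` coming from `p² e^{-p} ≤ 2`
and the bound on `p₂ |φ(p₁ + p₂) - φ(p₁)|` following from it by the mean value theorem.

For `f ∈ C_c([0, ∞))`, subtract `f 0 · (1 + p φ₀(p))` with `φ₀ = -min(p, 1/p) ∈ V`: the remainder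
`u` vanishes at `0` and for large `p`, so `u ≈ p g` with `g` continuous and compactly supported
(`g = u(p)/p` away from `0`, frozen near `0`). Approximating `e^p g` by a polynomial `r` in
`e^{-p}` gives `p g ≈ p · e^{-p} r(e^{-p})` with error at most `p e^{-p} ≤ 1` times that of `r`.
-/

open Polynomial Set Real

lemma mul_exp_neg_le_one (p : ℝ) : p * exp (-p) ≤ 1 :=
  (mul_exp_neg_le_exp_neg_one p).trans (exp_le_one_iff.mpr (by norm_num))

lemma sq_mul_exp_neg_le_two {p : ℝ} (hp : 0 ≤ p) : p ^ 2 * exp (-p) ≤ 2 := by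
  have h := pow_div_factorial_le_exp p hp 2
  rw [exp_neg, ← div_eq_mul_inv, div_le_iff₀ (exp_pos p)]
  norm_num [Nat.factorial] at h
  linarith

namespace MemV

variable {φ φ' ψ ψ' : ℝ → ℝ} {S T : Set ℝ}

lemma add (hφ : MemV φ φ' S) (hψ : MemV ψ ψ' T) : MemV (φ + ψ) (φ' + ψ') (S ∪ T) where
  cont := hφ.cont.add hψ.cont
  tendsto_atTop := by
    obtain ⟨L, hL⟩ := hφ.tendsto_atTop
    obtain ⟨L', hL'⟩ := hψ.tendsto_atTop
    exact ⟨L + L', hL.add hL'⟩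
  S_locFinite a b := by
    rw [union_inter_distrib_right]
    exact (hφ.S_locFinite a b).union (hψ.S_locFinite a b)
  hasDeriv p hp :=
    (hφ.hasDeriv p (sdiff_subset_sdiff_right subset_union_left hp)).add
      (hψ.hasDeriv p (sdiff_subset_sdiff_right subset_union_right hp))
  deriv_cont :=
    (hφ.deriv_cont.mono (sdiff_subset_sdiff_right subset_union_left)).add
      (hψ.deriv_cont.mono (sdiff_subset_sdiff_right subset_union_right))
  bdd1 := by
    obtain ⟨M, hM⟩ := hφ.bdd1
    obtain ⟨N, hN⟩ := hψ.bdd1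
    refine ⟨M + N, ?_⟩
    rintro _ ⟨p, hp, rfl⟩
    exact (abs_add_le _ _).trans (add_le_add (hM ⟨p, hp, rfl⟩) (hN ⟨p, hp, rfl⟩))
  bdd2 := by
    obtain ⟨M, hM⟩ := hφ.bdd2
    obtain ⟨N, hN⟩ := hψ.bdd2
    refine ⟨M + N, ?_⟩
    rintro _ ⟨p, hp, rfl⟩
    calc p ^ 2 * |φ' p + ψ' p| ≤ p ^ 2 * |φ' p| + p ^ 2 * |ψ' p| := by
          rw [← mul_add]; gcongr; exact abs_add_le _ _
      _ ≤ M + N := add_le_add (hM ⟨p, hp, rfl⟩) (hN ⟨p, hp, rfl⟩)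
  bdd3 := by
    obtain ⟨M, hM⟩ := hφ.bdd3
    obtain ⟨N, hN⟩ := hψ.bdd3
    refine ⟨M + N, ?_⟩
    rintro _ ⟨p₁, p₂, h₂, h₂₁, rfl⟩
    calc p₂ * |(φ + ψ) (p₁ + p₂) - (φ + ψ) p₁|
        ≤ p₂ * |φ (p₁ + p₂) - φ p₁| + p₂ * |ψ (p₁ + p₂) - ψ p₁| := by
          rw [← mul_add, Pi.add_apply, Pi.add_apply, add_sub_add_comm]
          gcongr
          exact abs_add_le _ _
      _ ≤ M + N := add_le_add (hM ⟨p₁, p₂, h₂, h₂₁, rfl⟩) (hN ⟨p₁, p₂, h₂, h₂₁, rfl⟩)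

lemma const_mul (hφ : MemV φ φ' S) (a : ℝ) :
    MemV (fun p => a * φ p) (fun p => a * φ' p) S where
  cont := continuousOn_const.mul hφ.cont
  tendsto_atTop := by
    obtain ⟨L, hL⟩ := hφ.tendsto_atTop
    exact ⟨a * L, hL.const_mul a⟩
  S_locFinite := hφ.S_locFinite
  hasDeriv p hp := (hφ.hasDeriv p hp).const_mul a
  deriv_cont := continuousOn_const.mul hφ.deriv_cont
  bdd1 := by
    obtain ⟨M, hM⟩ := hφ.bdd1
    refine ⟨|a| * M, ?_⟩
    rintro _ ⟨p, hp, rfl⟩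
    dsimp only
    rw [abs_mul]
    exact mul_le_mul_of_nonneg_left (hM ⟨p, hp, rfl⟩) (abs_nonneg a)
  bdd2 := by
    obtain ⟨M, hM⟩ := hφ.bdd2
    refine ⟨|a| * M, ?_⟩
    rintro _ ⟨p, hp, rfl⟩
    dsimp only
    rw [abs_mul, mul_left_comm]
    exact mul_le_mul_of_nonneg_left (hM ⟨p, hp, rfl⟩) (abs_nonneg a)
  bdd3 := by
    obtain ⟨M, hM⟩ := hφ.bdd3
    refine ⟨|a| * M, ?_⟩
    rintro _ ⟨p₁, p₂, h₂, h₂₁, rfl⟩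
    rw [← mul_sub, abs_mul, mul_left_comm]
    exact mul_le_mul_of_nonneg_left (hM ⟨p₁, p₂, h₂, h₂₁, rfl⟩) (abs_nonneg a)

end MemV

lemma mul_abs_sub_le_of_sq_mul_abs_deriv_le {φ φ' : ℝ → ℝ} {M p₁ p₂ : ℝ} (hp₁ : 0 < p₁)
    (h₂ : 0 ≤ p₂) (h₂₁ : p₂ ≤ p₁) (hM : 0 ≤ M)
    (hd : ∀ x ∈ Icc p₁ (p₁ + p₂), HasDerivAt φ (φ' x) x)
    (hbound : ∀ x ∈ Icc p₁ (p₁ + p₂), x ^ 2 * |φ' x| ≤ M) :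
    p₂ * |φ (p₁ + p₂) - φ p₁| ≤ M := by
  have hderiv_le : ∀ x ∈ Icc p₁ (p₁ + p₂), ‖φ' x‖ ≤ M / p₁ ^ 2 := by
    intro x hx
    rw [Real.norm_eq_abs, le_div_iff₀ (by positivity)]
    calc |φ' x| * p₁ ^ 2 ≤ |φ' x| * x ^ 2 := by gcongr; exact hx.1
      _ ≤ M := by rw [mul_comm]; exact hbound x hx
  have hmvt := (convex_Icc p₁ (p₁ + p₂)).norm_image_sub_le_of_norm_hasDerivWithin_le
    (fun x hx => (hd x hx).hasDerivWithinAt) hderiv_le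
    (left_mem_Icc.2 (by linarith)) (right_mem_Icc.2 (by linarith))
  rw [Real.norm_eq_abs, Real.norm_eq_abs, add_sub_cancel_left, abs_of_nonneg h₂] at hmvt
  calc p₂ * |φ (p₁ + p₂) - φ p₁| ≤ p₂ * (M / p₁ ^ 2 * p₂) := by gcongr
    _ = M * (p₂ / p₁) ^ 2 := by ring
    _ ≤ M * 1 := by
        gcongr
        exact pow_le_one₀ (by positivity) ((div_le_one hp₁).2 h₂₁)
    _ = M := mul_one M

lemma MemV.of_hasDerivAt {φ φ' : ℝ → ℝ} (hd : ∀ p, HasDerivAt φ (φ' p) p)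
    (hφ' : Continuous φ') (hlim : ∃ L, Tendsto φ atTop (𝓝 L))
    (hbdd : BddAbove ((fun p => |φ p|) '' Ici 0))
    (hbdd' : BddAbove ((fun p => p ^ 2 * |φ' p|) '' Ici 0)) : MemV φ φ' ∅ where
  cont := (continuous_iff_continuousAt.2 fun p => (hd p).continuousAt).continuousOn
  tendsto_atTop := hlim
  S_locFinite _ _ := by simp
  hasDeriv p _ := (hd p).hasDerivWithinAt
  deriv_cont := hφ'.continuousOn
  bdd1 := hbdd
  bdd2 := hbdd'
  bdd3 := by
    obtain ⟨M, hM⟩ := hbdd'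
    have hM' : ∀ p, 0 ≤ p → p ^ 2 * |φ' p| ≤ M := fun p hp => hM ⟨p, hp, rfl⟩
    have hM0 : 0 ≤ M := by simpa using hM' 0 le_rfl
    refine ⟨M, ?_⟩
    rintro _ ⟨p₁, p₂, h₂, h₂₁, rfl⟩
    rcases h₂.eq_or_lt with rfl | h₂pos
    · simpa using hM0
    have hp₁ : 0 < p₁ := h₂pos.trans_le h₂₁
    exact mul_abs_sub_le_of_sq_mul_abs_deriv_le hp₁ h₂ h₂₁ hM0 (fun x _ => hd x)
      fun x hx => hM' x (hp₁.le.trans hx.1)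

lemma exp_neg_mem_Icc {p : ℝ} (hp : 0 ≤ p) : exp (-p) ∈ Icc (0 : ℝ) 1 :=
  ⟨(exp_pos _).le, exp_le_one_iff.2 (neg_nonpos.2 hp)⟩

lemma memV_eval_exp_neg (q : ℝ[X]) :
    MemV (fun p => q.eval (exp (-p))) (fun p => -exp (-p) * q.derivative.eval (exp (-p))) ∅ := by
  obtain ⟨C, hC⟩ := isCompact_Icc.exists_bound_of_continuousOn
    (q.continuous.continuousOn (s := Icc (0 : ℝ) 1))
  obtain ⟨C', hC'⟩ := isCompact_Icc.exists_bound_of_continuousOn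
    (q.derivative.continuous.continuousOn (s := Icc (0 : ℝ) 1))
  have hC'0 : 0 ≤ C' := (norm_nonneg _).trans (hC' 0 ⟨le_rfl, zero_le_one⟩)
  refine MemV.of_hasDerivAt (fun p => ?_) (by fun_prop) ⟨q.eval 0, ?_⟩ ⟨C, ?_⟩ ⟨2 * C', ?_⟩
  · exact ((q.hasDerivAt _).comp p (hasDerivAt_neg p).exp).congr_deriv (by ring)
  · exact (q.continuous.tendsto 0).comp tendsto_exp_neg_atTop_nhds_zero
  · rintro _ ⟨p, hp, rfl⟩
    simpa using hC _ (exp_neg_mem_Icc hp)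
  · rintro _ ⟨p, hp, rfl⟩
    have hq' : |q.derivative.eval (exp (-p))| ≤ C' := by
      simpa using hC' _ (exp_neg_mem_Icc hp)
    calc p ^ 2 * |-exp (-p) * q.derivative.eval (exp (-p))|
        = p ^ 2 * exp (-p) * |q.derivative.eval (exp (-p))| := by
          rw [abs_mul, abs_neg, abs_of_pos (exp_pos _), mul_assoc]
      _ ≤ 2 * C' := mul_le_mul (sq_mul_exp_neg_le_two hp) hq' (abs_nonneg _) zero_le_two

/-- `-min p p⁻¹` for `p ≥ 0`, in a form that is continuous on all of `ℝ`. -/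
def negMinInv (p : ℝ) : ℝ := -p / max 1 (p ^ 2)

def negMinInvDeriv (p : ℝ) : ℝ := if p ≤ 1 then -1 else (p ^ 2)⁻¹

lemma negMinInv_of_abs_le_one {p : ℝ} (h : |p| ≤ 1) : negMinInv p = -p := by
  rw [negMinInv, max_eq_left ((sq_le_one_iff_abs_le_one p).2 h), div_one]

lemma negMinInv_of_one_le {p : ℝ} (h : 1 ≤ p) : negMinInv p = -p⁻¹ := by
  have hp : p ≠ 0 := by positivity
  rw [negMinInv, max_eq_right (one_le_pow₀ h)]
  field_simp

lemma one_add_mul_negMinInv {p : ℝ} (h : 1 ≤ p) : 1 + p * negMinInv p = 0 := by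
  rw [negMinInv_of_one_le h, mul_neg, mul_inv_cancel₀ (by positivity), add_neg_cancel]

lemma continuous_negMinInv : Continuous negMinInv :=
  continuous_neg.div (continuous_const.max (continuous_pow 2))
    fun _ => (one_pos.trans_le (le_max_left _ _)).ne'

lemma abs_negMinInv_le_one (p : ℝ) : |negMinInv p| ≤ 1 := by
  have hmax : 0 < max 1 (p ^ 2) := one_pos.trans_le (le_max_left _ _)
  rw [negMinInv, abs_div, abs_neg, abs_of_pos hmax, div_le_one hmax]
  rcases le_total |p| 1 with h | h
  · exact h.trans (le_max_left _ _)
  · exact le_max_of_le_right (by nlinarith [sq_abs p])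

lemma sq_mul_abs_negMinInvDeriv_le_one {p : ℝ} (hp : 0 ≤ p) : p ^ 2 * |negMinInvDeriv p| ≤ 1 := by
  unfold negMinInvDeriv
  split_ifs with h
  · rw [abs_neg, abs_one, mul_one]
    exact pow_le_one₀ hp h
  · have hp2 : 0 < p ^ 2 := pow_pos (by linarith) 2
    rw [abs_of_pos (inv_pos.2 hp2), mul_inv_cancel₀ hp2.ne']

lemma eventuallyEq_negMinInv_of_abs_lt_one {p : ℝ} (h : |p| < 1) :
    negMinInv =ᶠ[𝓝 p] fun x => -x := by
  filter_upwards [Ioo_mem_nhds (abs_lt.1 h).1 (abs_lt.1 h).2] with x hx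
  exact negMinInv_of_abs_le_one (abs_le.2 ⟨hx.1.le, hx.2.le⟩)

lemma hasDerivAt_negMinInv {p : ℝ} (h0 : 0 ≤ p) (h1 : p ≠ 1) :
    HasDerivAt negMinInv (negMinInvDeriv p) p := by
  rcases h1.lt_or_gt with h | h
  · rw [negMinInvDeriv, if_pos h.le]
    exact (hasDerivAt_neg p).congr_of_eventuallyEq
      (eventuallyEq_negMinInv_of_abs_lt_one (abs_lt.2 ⟨by linarith, h⟩))
  · rw [negMinInvDeriv, if_neg h.not_ge]
    have hd := (hasDerivAt_inv (by linarith : (0 : ℝ) < p).ne').neg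
    rw [neg_neg] at hd
    refine hd.congr_of_eventuallyEq ?_
    filter_upwards [Ioi_mem_nhds h] with x hx
    exact negMinInv_of_one_le hx.le

lemma continuousOn_negMinInvDeriv : ContinuousOn negMinInvDeriv {1}ᶜ := by
  intro p hp
  refine ContinuousAt.continuousWithinAt ?_
  rcases (show p ≠ 1 from hp).lt_or_gt with h | h
  · refine continuousAt_const.congr (f := fun _ => (-1 : ℝ)) ?_
    filter_upwards [Iio_mem_nhds h] with x hx
    exact (if_pos hx.le).symm
  · refine ((continuous_pow 2).continuousAt.inv₀ (pow_pos (by linarith) 2).ne').congr ?_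
    filter_upwards [Ioi_mem_nhds h] with x hx
    exact (if_neg (not_le.2 hx)).symm

lemma memV_negMinInv : MemV negMinInv negMinInvDeriv {1} where
  cont := continuous_negMinInv.continuousOn
  tendsto_atTop := by
    have h : Tendsto (fun p : ℝ => -p⁻¹) atTop (𝓝 0) := by
      simpa using (tendsto_inv_atTop_zero (𝕜 := ℝ)).neg
    refine ⟨0, h.congr' ?_⟩
    filter_upwards [eventually_ge_atTop 1] with p hp
    exact (negMinInv_of_one_le hp).symm
  S_locFinite _ _ := (finite_singleton 1).subset inter_subset_left
  hasDeriv p hp := (hasDerivAt_negMinInv hp.1 hp.2).hasDerivWithinAt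
  deriv_cont := continuousOn_negMinInvDeriv.mono fun _ hp => hp.2
  bdd1 := ⟨1, by rintro _ ⟨p, -, rfl⟩; exact abs_negMinInv_le_one p⟩
  bdd2 := ⟨1, by rintro _ ⟨p, hp, rfl⟩; exact sq_mul_abs_negMinInvDeriv_le_one hp⟩
  bdd3 := by
    refine ⟨2, ?_⟩
    rintro _ ⟨p₁, p₂, h₂, h₂₁, rfl⟩
    rcases le_or_gt p₁ 1 with h | h
    · calc p₂ * |negMinInv (p₁ + p₂) - negMinInv p₁|
          ≤ 1 * (|negMinInv (p₁ + p₂)| + |negMinInv p₁|) :=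
            mul_le_mul (h₂₁.trans h) (abs_sub _ _) (abs_nonneg _) zero_le_one
        _ ≤ 1 * (1 + 1) := by gcongr <;> exact abs_negMinInv_le_one _
        _ = 2 := by norm_num
    · refine (mul_abs_sub_le_of_sq_mul_abs_deriv_le (by linarith) h₂ h₂₁ zero_le_one
        (fun x hx => hasDerivAt_negMinInv (by linarith [hx.1]) (by linarith [hx.1]))
        fun x hx => sq_mul_abs_negMinInvDeriv_le_one (by linarith [hx.1])).trans one_le_two

lemma exists_polynomial_near_comp_exp_neg {f : ℝ → ℝ} {L : ℝ} (hf : ContinuousOn f (Ici 0))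
    (hL : Tendsto f atTop (𝓝 L)) {ε : ℝ} (hε : 0 < ε) :
    ∃ q : ℝ[X], ∀ p, 0 ≤ p → |f p - q.eval (exp (-p))| < ε := by
  set g : ℝ → ℝ := fun x => if x ≤ 0 then L else f (-log x)
  have hg_pos : ∀ x, 0 < x → g x = f (-log x) := fun x hx => if_neg hx.not_ge
  have hg : ContinuousOn g (Icc 0 1) := by
    intro x hx
    rcases hx.1.eq_or_lt with rfl | hx0
    · have hlim : Tendsto g (𝓝[>] 0) (𝓝 L) := by
        refine (hL.comp (tendsto_neg_atBot_atTop.comp tendsto_log_nhdsGT_zero)).congr' ?_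
        filter_upwards [self_mem_nhdsWithin] with y hy
        exact (hg_pos y hy).symm
      have hcont : ContinuousWithinAt g (Ioi 0) 0 := by
        rwa [ContinuousWithinAt, show g 0 = L from if_pos le_rfl]
      exact (continuousWithinAt_Ioi_iff_Ici.1 hcont).mono Icc_subset_Ici_self
    · have hmaps : MapsTo (fun y => -log y) (Icc 0 1) (Ici 0) :=
        fun y hy => neg_nonneg.2 (log_nonpos hy.1 hy.2)
      refine (ContinuousWithinAt.comp (f := fun y => -log y) (hf.continuousWithinAt (hmaps hx))
        (continuousAt_log hx0.ne').neg.continuousWithinAt hmaps).congr_of_eventuallyEq ?_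
        (hg_pos x hx0)
      filter_upwards [nhdsWithin_le_nhds (Ioi_mem_nhds hx0)] with y hy
      exact hg_pos y hy
  obtain ⟨q, hq⟩ := exists_polynomial_near_of_continuousOn 0 1 g hg ε hε
  refine ⟨q, fun p hp => ?_⟩
  have h := hq _ (exp_neg_mem_Icc hp)
  rwa [hg_pos _ (exp_pos _), log_exp, neg_neg, abs_sub_comm] at h

theorem exists_memV_near {f : ℝ → ℝ} (hf : ContinuousOn f (Ici 0))
    (hlim : ∃ L, Tendsto f atTop (𝓝 L)) {ε : ℝ} (hε : 0 < ε) :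
    ∃ (φ φ' : ℝ → ℝ) (S : Set ℝ), MemV φ φ' S ∧ ∀ p, 0 ≤ p → |f p - φ p| ≤ ε := by
  obtain ⟨L, hL⟩ := hlim
  obtain ⟨q, hq⟩ := exists_polynomial_near_comp_exp_neg hf hL hε
  exact ⟨_, _, _, memV_eval_exp_neg q, fun p hp => (hq p hp).le⟩

lemma exists_abs_sub_mul_div_max_le {u : ℝ → ℝ} (hu : ContinuousWithinAt u (Ici 0) 0)
    (hu0 : u 0 = 0) {ε : ℝ} (hε : 0 < ε) :
    ∃ δ > 0, ∀ p, 0 ≤ p → |u p - p * (u (max p δ) / max p δ)| ≤ ε := by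
  obtain ⟨δ, hδ, hsmall⟩ := Metric.continuousWithinAt_iff.1 hu (ε / 2) (half_pos hε)
  have hsmall' : ∀ x, 0 ≤ x → x ≤ δ / 2 → |u x| ≤ ε / 2 := by
    intro x hx hxδ
    have h := hsmall (x := x) hx (by rw [Real.dist_eq, sub_zero, abs_of_nonneg hx]; linarith)
    rw [Real.dist_eq, hu0, sub_zero] at h
    exact h.le
  refine ⟨δ / 2, half_pos hδ, fun p hp => ?_⟩
  rcases le_total (δ / 2) p with hpδ | hpδ
  · rw [max_eq_left hpδ, mul_div_cancel₀ _ (by linarith), sub_self, abs_zero]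
    exact hε.le
  · rw [max_eq_right hpδ]
    calc |u p - p * (u (δ / 2) / (δ / 2))| ≤ |u p| + p / (δ / 2) * |u (δ / 2)| := by
          refine (abs_sub _ _).trans_eq ?_
          rw [mul_div_left_comm, abs_mul, abs_div, abs_of_nonneg hp, abs_of_pos (half_pos hδ)]
          ring
      _ ≤ ε / 2 + 1 * (ε / 2) := by
          gcongr
          · exact hsmall' p hp hpδ
          · exact (div_le_one (half_pos hδ)).2 hpδ
          · exact hsmall' _ (half_pos hδ).le le_rfl
      _ = ε := by ring

lemma exists_memV_mul_near {u : ℝ → ℝ} (hu : ContinuousOn u (Ici 0)) (hu0 : u 0 = 0)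
    (hsupp : ∃ R, ∀ p, R ≤ p → u p = 0) {ε : ℝ} (hε : 0 < ε) :
    ∃ (φ φ' : ℝ → ℝ) (S : Set ℝ), MemV φ φ' S ∧ ∀ p, 0 ≤ p → |u p - p * φ p| ≤ ε := by
  obtain ⟨R, hR⟩ := hsupp
  obtain ⟨δ, hδ, hug⟩ := exists_abs_sub_mul_div_max_le (hu 0 (mem_Ici.2 le_rfl)) hu0 (half_pos hε)
  set g : ℝ → ℝ := fun p => u (max p δ) / max p δ
  have hmax : ∀ p, 0 < max p δ := fun p => hδ.trans_le (le_max_right p δ)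
  have hg : ContinuousOn (fun p => exp p * g p) (Ici 0) := by
    have hmax_cont : Continuous fun p => max p δ := continuous_id.max continuous_const
    refine continuous_exp.continuousOn.mul (ContinuousOn.div ?_ hmax_cont.continuousOn
      fun p _ => (hmax p).ne')
    exact hu.comp hmax_cont.continuousOn fun p _ => (hmax p).le
  have hg_lim : Tendsto (fun p => exp p * g p) atTop (𝓝 0) := by
    refine tendsto_const_nhds.congr' ?_
    filter_upwards [eventually_ge_atTop (max R δ)] with p hp
    show 0 = exp p * (u (max p δ) / max p δ)
    rw [max_eq_left (le_of_max_le_right hp), hR p (le_of_max_le_left hp), zero_div, mul_zero]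
  obtain ⟨r, hr⟩ := exists_polynomial_near_comp_exp_neg hg hg_lim (half_pos hε)
  refine ⟨_, _, _, memV_eval_exp_neg (X * r), fun p hp => ?_⟩
  have hsplit : u p - p * (X * r).eval (exp (-p))
      = (u p - p * g p) + p * exp (-p) * (exp p * g p - r.eval (exp (-p))) := by
    rw [eval_mul, eval_X, exp_neg]
    field_simp
    ring
  calc |u p - p * (X * r).eval (exp (-p))|
      ≤ |u p - p * g p| + p * exp (-p) * |exp p * g p - r.eval (exp (-p))| := by
        rw [hsplit]
        refine (abs_add_le _ _).trans_eq ?_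
        rw [abs_mul, abs_of_nonneg (by positivity : 0 ≤ p * exp (-p))]
    _ ≤ ε / 2 + 1 * (ε / 2) := by
        gcongr
        · exact hug p hp
        · exact mul_exp_neg_le_one p
        · exact (hr p hp).le
    _ = ε := by ring

theorem exists_memW_near {f : ℝ → ℝ} (hf : ContinuousOn f (Ici 0))
    (hsupp : ∃ R, ∀ p, R ≤ p → f p = 0) {ε : ℝ} (hε : 0 < ε) :
    ∃ ψ : ℝ → ℝ, MemW ψ ∧ ∀ p, 0 ≤ p → |f p - ψ p| ≤ ε := by
  obtain ⟨R, hR⟩ := hsupp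
  set u : ℝ → ℝ := fun p => f p - f 0 * (1 + p * negMinInv p) with hu_def
  have hu : ContinuousOn u (Ici 0) :=
    hf.sub (continuous_const.mul (continuous_const.add
      (continuous_id.mul continuous_negMinInv))).continuousOn
  have hu0 : u 0 = 0 := by simp [u]
  have hu_supp : ∀ p, max R 1 ≤ p → u p = 0 := fun p hp => by
    simp only [u, hR p (le_of_max_le_left hp), one_add_mul_negMinInv (le_of_max_le_right hp),
      mul_zero, sub_zero]
  obtain ⟨φ, φ', S, hφ, hu_approx⟩ := exists_memV_mul_near hu hu0 ⟨_, hu_supp⟩ hε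
  refine ⟨fun p => f 0 + p * (f 0 * negMinInv p + φ p),
    ⟨f 0, _, _, _, (memV_negMinInv.const_mul (f 0)).add hφ, fun p _ => rfl⟩, fun p hp => ?_⟩
  convert hu_approx p hp using 2
  rw [hu_def]
  ring

/-- `V([0,∞])` is dense, in the sup norm, in the space `C([0,∞])` of
continuous functions on `[0,∞)` admitting a finite limit at `∞`; moreover every
`f ∈ C_c([0,∞))` can be approximated in sup norm by elements of `W([0,∞))`. -/
theorem statement2 :
    (∀ f : ℝ → ℝ, ContinuousOn f (Set.Ici 0) → (∃ L : ℝ, Tendsto f atTop (𝓝 L)) →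
      ∀ ε : ℝ, 0 < ε → ∃ (φ φ' : ℝ → ℝ) (S : Set ℝ), MemV φ φ' S ∧
        ∀ p : ℝ, 0 ≤ p → |f p - φ p| ≤ ε) ∧
    (∀ f : ℝ → ℝ, ContinuousOn f (Set.Ici 0) → (∃ R : ℝ, ∀ p : ℝ, R ≤ p → f p = 0) →
      ∀ ε : ℝ, 0 < ε → ∃ ψ : ℝ → ℝ, MemW ψ ∧ ∀ p : ℝ, 0 ≤ p → |f p - ψ p| ≤ ε) :=
  ⟨fun _ hf hlim _ hε => exists_memV_near hf hlim hε,
    fun _ hf hsupp _ hε => exists_memW_near hf hsupp hε⟩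
end
end

section
/- For every ψ in W([0,∞)), setting φ(p) := ψ(p)/p for p > 0, there exist constants c₁, c₂ > 0 (depending on ψ) such that |H¹_φ(p₁,p₂)| ≤ c₁ · p₁ · p₂ for all p₁ ≥ p₂ ≥ 0, and |H²_φ(p,p)| ≤ c₂ · p² for all p ≥ 0. -/
open Filter Topology

noncomputable section

/-! Write `ψ = c + p φ` with `φ ∈ V`. The constant contributes exactly `-4 c p₁ p₂` to `H¹` and
`-4 c p²` to `H²(p,p)`. For `φ`, the bound `p² |φ'(p)| ≤ K` says that `s ↦ φ(1/s)` is
`K`-Lipschitz, i.e. `a b |φ(b) - φ(a)| ≤ K (b - a)`. The coefficients of `H¹_φ` sum to zero, so it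
is a combination of the three increments `φ(p₁ ± p₂) - φ(p₁)` and `φ(p₁) - φ(p₂)`, each of which
is controlled by that Lipschitz bound. -/

open Set

theorem image_le_of_hasDerivAt_nonpos_off_finite {f f' : ℝ → ℝ} {S : Set ℝ} (hS : S.Finite)
    {a b : ℝ} (hab : a ≤ b) (hc : ContinuousOn f (Icc a b))
    (hd : ∀ x ∈ Ioo a b \ S, HasDerivAt f (f' x) x) (hf' : ∀ x ∈ Ioo a b \ S, f' x ≤ 0) :
    f b ≤ f a := by
  induction S, hS using Set.Finite.induction_on generalizing a b with
  | empty =>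
    simp only [sdiff_empty] at hd hf'
    refine antitoneOn_of_hasDerivWithinAt_nonpos (f' := f') (convex_Icc a b) hc ?_ ?_
      (left_mem_Icc.2 hab) (right_mem_Icc.2 hab) hab <;> rw [interior_Icc]
    exacts [fun x hx => (hd x hx).hasDerivWithinAt, hf']
  | @insert s T _ _ ih =>
    have hsub : ∀ {a' b'}, Ioo a' b' ⊆ Ioo a b → s ∉ Ioo a' b' →
        Ioo a' b' \ T ⊆ Ioo a b \ insert s T := fun hI hs x ⟨hx, hxT⟩ =>
      ⟨hI hx, by rintro (rfl | hxT'); exacts [hs hx, hxT hxT']⟩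
    by_cases hs : s ∈ Ioo a b
    · have left : f s ≤ f a :=
        ih hs.1.le (hc.mono (Icc_subset_Icc_right hs.2.le))
          (fun x hx => hd x (hsub (Ioo_subset_Ioo_right hs.2.le) (fun h => h.2.false) hx))
          (fun x hx => hf' x (hsub (Ioo_subset_Ioo_right hs.2.le) (fun h => h.2.false) hx))
      have right : f b ≤ f s :=
        ih hs.2.le (hc.mono (Icc_subset_Icc_left hs.1.le))
          (fun x hx => hd x (hsub (Ioo_subset_Ioo_left hs.1.le) (fun h => h.1.false) hx))
          (fun x hx => hf' x (hsub (Ioo_subset_Ioo_left hs.1.le) (fun h => h.1.false) hx))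
      exact right.trans left
    · exact ih hab hc (fun x hx => hd x (hsub subset_rfl hs hx))
        (fun x hx => hf' x (hsub subset_rfl hs hx))

theorem abs_sub_le_of_abs_deriv_le_deriv_off_finite {f f' g g' : ℝ → ℝ} {S : Set ℝ}
    (hS : S.Finite) {a b : ℝ} (hab : a ≤ b) (hfc : ContinuousOn f (Icc a b))
    (hgc : ContinuousOn g (Icc a b)) (hfd : ∀ x ∈ Ioo a b \ S, HasDerivAt f (f' x) x)
    (hgd : ∀ x ∈ Ioo a b \ S, HasDerivAt g (g' x) x) (hle : ∀ x ∈ Ioo a b \ S, |f' x| ≤ g' x) :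
    |f b - f a| ≤ g b - g a := by
  have upper : f b - g b ≤ f a - g a :=
    image_le_of_hasDerivAt_nonpos_off_finite (f := fun x => f x - g x) hS hab (hfc.sub hgc)
      (fun x hx => (hfd x hx).sub (hgd x hx))
      (fun x hx => by linarith [le_abs_self (f' x), hle x hx])
  have lower : -f b - g b ≤ -f a - g a :=
    image_le_of_hasDerivAt_nonpos_off_finite (f := fun x => -f x - g x) hS hab
      (hfc.neg.sub hgc) (fun x hx => (hfd x hx).neg.sub (hgd x hx))
      (fun x hx => by linarith [neg_abs_le (f' x), hle x hx])
  rw [abs_sub_le_iff]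
  constructor <;> linarith

/-- `s ↦ φ(1/s)` is `K`-Lipschitz on `(0, ∞)`, in a form free of division (it then holds
trivially at `a = 0` as soon as `0 ≤ K`). -/
def LipschitzInInv (K : ℝ) (φ : ℝ → ℝ) : Prop :=
  ∀ a b : ℝ, 0 ≤ a → a ≤ b → a * b * |φ b - φ a| ≤ K * (b - a)

theorem LipschitzInInv.nonneg {K : ℝ} {φ : ℝ → ℝ} (h : LipschitzInInv K φ) : 0 ≤ K := by
  simpa using h 0 1 le_rfl zero_le_one

theorem MemV.lipschitzInInv {φ φ' : ℝ → ℝ} {S : Set ℝ} (hV : MemV φ φ' S) {K : ℝ}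
    (hK : ∀ p, 0 < p → p ^ 2 * |φ' p| ≤ K) : LipschitzInInv K φ := by
  intro a b ha hab
  rcases ha.eq_or_lt with rfl | ha
  · have hK₀ : 0 ≤ K := (by positivity : (0 : ℝ) ≤ 1 ^ 2 * |φ' 1|).trans (hK 1 one_pos)
    simpa using mul_nonneg hK₀ hab
  have hpos : ∀ x ∈ Icc a b, 0 < x := fun x hx => ha.trans_le hx.1
  have hφd : ∀ x ∈ Ioo a b \ (S ∩ Icc a b), HasDerivAt φ (φ' x) x := fun x ⟨hx, hxS⟩ =>
    (hV.hasDeriv x ⟨(hpos x (Ioo_subset_Icc_self hx)).le,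
      fun h => hxS ⟨h, Ioo_subset_Icc_self hx⟩⟩).hasDerivAt
      (Ici_mem_nhds (hpos x (Ioo_subset_Icc_self hx)))
  have key : |φ b - φ a| ≤ -K * b⁻¹ - -K * a⁻¹ :=
    abs_sub_le_of_abs_deriv_le_deriv_off_finite (g' := fun x => -K * -(x ^ 2)⁻¹)
      (hV.S_locFinite a b) hab (hV.cont.mono fun x hx => (hpos x hx).le)
      (continuousOn_const.mul (continuousOn_inv₀.mono fun x hx => (hpos x hx).ne'))
      hφd (fun x hx => (hasDerivAt_inv (hpos x (Ioo_subset_Icc_self hx.1)).ne').const_mul _)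
      (fun x hx => by
        have hx0 := hpos x (Ioo_subset_Icc_self hx.1)
        rw [neg_mul_neg, ← div_eq_mul_inv, le_div_iff₀ (by positivity), mul_comm]
        exact hK x hx0)
  have hb : 0 < b := ha.trans_le hab
  calc a * b * |φ b - φ a| ≤ a * b * (-K * b⁻¹ - -K * a⁻¹) := by gcongr
    _ = K * (b - a) := by field_simp; ring

theorem abs_H1_le {K : ℝ} {φ : ℝ → ℝ} (hφ : LipschitzInInv K φ) {p₁ p₂ : ℝ} (hp₂ : 0 ≤ p₂)
    (h : p₂ ≤ p₁) : |H1 φ p₁ p₂| ≤ 9 * K * p₁ * p₂ := by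
  rcases hp₂.eq_or_lt with rfl | hp₂
  · simp only [H1]; ring_nf; simp
  have hp₁ : 0 < p₁ := hp₂.trans_le h
  have hK := hφ.nonneg
  have split : H1 φ p₁ p₂ = (p₁ + p₂) ^ 3 * (φ (p₁ + p₂) - φ p₁)
      + (p₁ - p₂) ^ 3 * (φ (p₁ - p₂) - φ p₁) + 4 * p₁ * p₂ ^ 2 * (φ p₁ - φ p₂) := by
    simp only [H1]; ring
  have d₁ : p₁ * (p₁ + p₂) * |φ (p₁ + p₂) - φ p₁| ≤ K * p₂ := by
    simpa using hφ p₁ (p₁ + p₂) hp₁.le (by linarith)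
  have d₂ : (p₁ - p₂) * p₁ * |φ (p₁ - p₂) - φ p₁| ≤ K * p₂ := by
    rw [abs_sub_comm]; simpa using hφ (p₁ - p₂) p₁ (by linarith) (by linarith)
  have d₃ : p₂ * p₁ * |φ p₁ - φ p₂| ≤ K * (p₁ - p₂) := hφ p₂ p₁ hp₂.le h
  refine le_of_mul_le_mul_left ?_ hp₁
  calc p₁ * |H1 φ p₁ p₂|
      ≤ p₁ * ((p₁ + p₂) ^ 3 * |φ (p₁ + p₂) - φ p₁|
        + (p₁ - p₂) ^ 3 * |φ (p₁ - p₂) - φ p₁| + 4 * p₁ * p₂ ^ 2 * |φ p₁ - φ p₂|) := by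
        rw [split]
        gcongr
        refine (abs_add_three _ _ _).trans_eq ?_
        rw [abs_mul, abs_mul, abs_mul, abs_of_nonneg (by positivity : (0 : ℝ) ≤ (p₁ + p₂) ^ 3),
          abs_of_nonneg (pow_nonneg (sub_nonneg.2 h) 3),
          abs_of_nonneg (by positivity : (0 : ℝ) ≤ 4 * p₁ * p₂ ^ 2)]
    _ = (p₁ + p₂) ^ 2 * (p₁ * (p₁ + p₂) * |φ (p₁ + p₂) - φ p₁|)
        + (p₁ - p₂) ^ 2 * ((p₁ - p₂) * p₁ * |φ (p₁ - p₂) - φ p₁|)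
        + 4 * p₁ * p₂ * (p₂ * p₁ * |φ p₁ - φ p₂|) := by ring
    _ ≤ (p₁ + p₂) ^ 2 * (K * p₂) + (p₁ - p₂) ^ 2 * (K * p₂) + 4 * p₁ * p₂ * (K * (p₁ - p₂)) := by
        gcongr
    _ ≤ p₁ * (9 * K * p₁ * p₂) := by
        have hq : 0 ≤ 3 * p₁ ^ 2 + 4 * p₁ * p₂ - 2 * p₂ ^ 2 := by nlinarith
        nlinarith [mul_nonneg (mul_nonneg hK hp₂.le) hq]

theorem abs_H2_self_le {K : ℝ} {φ : ℝ → ℝ} (hφ : LipschitzInInv K φ) {p : ℝ} (hp : 0 ≤ p) :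
    |H2 φ p p| ≤ 4 * K * p ^ 2 := by
  have d : p * (p + p) * |φ (p + p) - φ p| ≤ K * p := by
    simpa using hφ p (p + p) hp (by linarith)
  have split : H2 φ p p = 4 * p * (p * (p + p)) * (φ (p + p) - φ p) := by
    simp only [H2]; ring
  calc |H2 φ p p| = 4 * p * (p * (p + p) * |φ (p + p) - φ p|) := by
        rw [split, abs_mul, abs_of_nonneg (by positivity)]; ring
    _ ≤ 4 * p * (K * p) := by gcongr
    _ = 4 * K * p ^ 2 := by ring

section Decomposition

variable {ψ φ : ℝ → ℝ} {c : ℝ}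

/-- The factor `p ^ 2` makes this hold also at `p = 0`, where `ψ 0 / 0 = 0`. -/
theorem sq_mul_div_self_eq (hψ : ∀ p, 0 ≤ p → ψ p = c + p * φ p) {p : ℝ} (hp : 0 ≤ p) :
    p ^ 2 * (ψ p / p) = c * p + p ^ 2 * φ p := by
  rcases hp.eq_or_lt with rfl | hp
  · simp
  · rw [hψ p hp.le]; field_simp

theorem H1_div_self_eq (hψ : ∀ p, 0 ≤ p → ψ p = c + p * φ p) {p₁ p₂ : ℝ} (hp₂ : 0 ≤ p₂)
    (h : p₂ ≤ p₁) : H1 (fun p => ψ p / p) p₁ p₂ = -4 * c * p₁ * p₂ + H1 φ p₁ p₂ := by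
  rcases (hp₂.trans h).eq_or_lt with rfl | hp₁
  · obtain rfl : p₂ = 0 := le_antisymm h hp₂
    simp [H1]
  have e₁ : p₁ * (ψ p₁ / p₁) = c + p₁ * φ p₁ := by rw [mul_div_cancel₀ _ hp₁.ne', hψ p₁ hp₁.le]
  have e_add := sq_mul_div_self_eq hψ (add_nonneg hp₁.le hp₂)
  have e_sub := sq_mul_div_self_eq hψ (sub_nonneg.2 h)
  have e₂ := sq_mul_div_self_eq hψ hp₂
  simp only [H1]
  linear_combination
    (p₁ + p₂) * e_add - 2 * (p₁ ^ 2 + p₂ ^ 2) * e₁ - 4 * p₁ * e₂ + (p₁ - p₂) * e_sub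

theorem H2_div_self_eq (hψ : ∀ p, 0 ≤ p → ψ p = c + p * φ p) {p : ℝ} (hp : 0 ≤ p) :
    H2 (fun p => ψ p / p) p p = -4 * c * p ^ 2 + H2 φ p p := by
  have e := sq_mul_div_self_eq hψ hp
  have e_add := sq_mul_div_self_eq hψ (add_nonneg hp hp)
  simp only [H2]
  linear_combination (p + p) * e_add - 8 * p * e

end Decomposition

/-- for every `ψ ∈ W([0,∞))`, setting `φ(p) := ψ(p)/p` (for `p > 0`), there
exist constants `c₁, c₂ > 0` (depending on `ψ`) with `|H¹_φ(p₁,p₂)| ≤ c₁ p₁ p₂` for all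
`p₁ ≥ p₂ ≥ 0`, and `|H²_φ(p,p)| ≤ c₂ p²` for all `p ≥ 0`. -/
theorem statement3 (ψ : ℝ → ℝ) (hψ : MemW ψ) :
    ∃ c₁ c₂ : ℝ, 0 < c₁ ∧ 0 < c₂ ∧
      (∀ p₁ p₂ : ℝ, 0 ≤ p₂ → p₂ ≤ p₁ → |H1 (fun p => ψ p / p) p₁ p₂| ≤ c₁ * p₁ * p₂) ∧
      (∀ p : ℝ, 0 ≤ p → |H2 (fun p => ψ p / p) p p| ≤ c₂ * p ^ 2) := by
  obtain ⟨c, φ, φ', S, hV, hψ⟩ := hψ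
  obtain ⟨K, hK⟩ := hV.bdd2
  have hφ : LipschitzInInv K φ := hV.lipschitzInInv fun p hp => hK ⟨p, hp.le, rfl⟩
  have hK₀ := hφ.nonneg
  refine ⟨4 * |c| + 9 * K + 1, 4 * |c| + 4 * K + 1, by positivity, by positivity,
    fun p₁ p₂ hp₂ h => ?_, fun p hp => ?_⟩
  · have hp₁₂ : 0 ≤ p₁ * p₂ := mul_nonneg (hp₂.trans h) hp₂
    calc |H1 (fun p => ψ p / p) p₁ p₂| ≤ |-4 * c * p₁ * p₂| + |H1 φ p₁ p₂| := by
          rw [H1_div_self_eq hψ hp₂ h]; exact abs_add_le _ _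
      _ ≤ 4 * |c| * (p₁ * p₂) + 9 * K * p₁ * p₂ := by
          gcongr
          · rw [show -4 * c * p₁ * p₂ = -4 * c * (p₁ * p₂) by ring, abs_mul, abs_mul,
              abs_of_nonneg hp₁₂]; norm_num
          · exact abs_H1_le hφ hp₂ h
      _ ≤ (4 * |c| + 9 * K + 1) * p₁ * p₂ := by nlinarith
  · calc |H2 (fun p => ψ p / p) p p| ≤ |-4 * c * p ^ 2| + |H2 φ p p| := by
          rw [H2_div_self_eq hψ hp]; exact abs_add_le _ _
      _ ≤ 4 * |c| * p ^ 2 + 4 * K * p ^ 2 := by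
          gcongr
          · rw [abs_mul, abs_mul, abs_of_nonneg (sq_nonneg p)]; norm_num
          · exact abs_H2_self_le hφ hp
      _ ≤ (4 * |c| + 4 * K + 1) * p ^ 2 := by nlinarith [sq_nonneg p]
end
end

section
/- Fix r > 0 and let φ_r(p) = (1 − r/p)₊ for p > 0 (that is, φ_r(p) = 1 − r/p if p ≥ r and φ_r(p) = 0 if 0 ≤ p < r, with φ_r(0) = 0). Then H¹_{φ_r}(p₁,p₂) ≥ 0 for all p₁ ≥ p₂ ≥ 0, H²_{φ_r}(p₁,p₂) ≥ 0 for all p₁, p₂ ≥ 0, and moreover H¹_{φ_r}(p,p) = H²_{φ_r}(p,p) for every p ≥ 0. -/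
/-!
Both functionals only see `g(p) = p φ(p)`, and for `φ = φ_r` this is the convex function
`g(p) = (p - r)₊` with `g(0) = 0`. Convexity in the form `g a + g b ≤ g x + g y` whenever
`x ≤ a, b ≤ y` and `a + b = x + y` gives superadditivity of `g` on `[0, ∞)`, hence `H² ≥ 0`, and
`H¹_φ(p₁,p₂) = (p₁+p₂)² (g(p₁+p₂) + g(p₁-p₂) - 2 g(p₁)) + 4 p₁ p₂ (g(p₁) - g(p₂) - g(p₁-p₂))`
is a sum of a second difference and a superadditivity defect of `g`, both nonnegative.
-/

open Filter Topology

noncomputable section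

/-- The test function `φ_r(p) = (1 - r/p)₊`: equal to `1 - r/p` for `p ≥ r`, and to `0`
for `0 ≤ p < r` (in particular `φ_r(0) = 0`). -/
def phiR (r p : ℝ) : ℝ := if p < r then 0 else 1 - r / p

open Set

theorem ConvexOn.add_le_add_of_add_eq {s : Set ℝ} {g : ℝ → ℝ} (hg : ConvexOn ℝ s g)
    {x y a b : ℝ} (hx : x ∈ s) (hy : y ∈ s) (hxa : x ≤ a) (hay : a ≤ y) (hab : a + b = x + y) :
    g a + g b ≤ g x + g y := by
  rcases hxa.eq_or_lt with rfl | hxa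
  · rw [show b = y by linarith]
  have hxy : 0 < y - x := by linarith
  set t := (y - a) / (y - x) with ht
  have ht0 : 0 ≤ t := div_nonneg (sub_nonneg.2 hay) hxy.le
  have ht1 : 0 ≤ 1 - t := by
    rw [ht, one_sub_div hxy.ne']
    exact div_nonneg (by linarith) hxy.le
  have hta : t * x + (1 - t) * y = a := by
    rw [ht]
    field_simp
    ring
  have hga := hg.2 hx hy ht0 ht1 (by ring)
  have hgb := hg.2 hx hy ht1 ht0 (by ring)
  simp only [smul_eq_mul] at hga hgb
  rw [hta] at hga
  rw [show (1 - t) * x + t * y = b by linarith] at hgb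
  linarith

theorem H1_self (φ : ℝ → ℝ) (p : ℝ) : H1 φ p p = H2 φ p p := by
  unfold H1 H2
  ring

section ConvexMulSelf

variable {φ : ℝ → ℝ} (hφ : ConvexOn ℝ (Ici 0) fun p => p * φ p)
include hφ

theorem H2_nonneg_of_convexOn {p₁ p₂ : ℝ} (h₁ : 0 ≤ p₁) (h₂ : 0 ≤ p₂) : 0 ≤ H2 φ p₁ p₂ := by
  have hsup := hφ.add_le_add_of_add_eq (x := 0) (y := p₁ + p₂) (b := p₂) self_mem_Ici
    (add_nonneg h₁ h₂) h₁ (by linarith) (by ring)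
  rw [zero_mul, zero_add] at hsup
  exact mul_nonneg (sq_nonneg _) (by linarith)

theorem H1_nonneg_of_convexOn {p₁ p₂ : ℝ} (h₂ : 0 ≤ p₂) (h₁₂ : p₂ ≤ p₁) :
    0 ≤ H1 φ p₁ p₂ := by
  have h₁ : 0 ≤ p₁ := h₂.trans h₁₂
  have hmid := hφ.add_le_add_of_add_eq (x := p₁ - p₂) (y := p₁ + p₂) (b := p₁)
    (sub_nonneg.2 h₁₂) (add_nonneg h₁ h₂) (by linarith) (by linarith) (by ring)
  have hsup := hφ.add_le_add_of_add_eq (x := 0) (y := p₁) (b := p₁ - p₂) self_mem_Ici h₁ h₂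
    h₁₂ (by ring)
  rw [zero_mul, zero_add] at hsup
  have hH1 : H1 φ p₁ p₂ =
      (p₁ + p₂) ^ 2 * ((p₁ + p₂) * φ (p₁ + p₂) + (p₁ - p₂) * φ (p₁ - p₂) - 2 * (p₁ * φ p₁))
        + 4 * p₁ * p₂ * (p₁ * φ p₁ - p₂ * φ p₂ - (p₁ - p₂) * φ (p₁ - p₂)) := by
    unfold H1
    ring
  rw [hH1]
  exact add_nonneg (mul_nonneg (sq_nonneg _) (by linarith))
    (mul_nonneg (by positivity) (by linarith))

end ConvexMulSelf

theorem mul_phiR {r : ℝ} (hr : 0 ≤ r) (p : ℝ) : p * phiR r p = max (p - r) 0 := by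
  unfold phiR
  split_ifs with hpr
  · rw [mul_zero, max_eq_right (by linarith)]
  · replace hpr := not_lt.1 hpr
    rw [max_eq_left (by linarith)]
    rcases (hr.trans hpr).eq_or_lt with rfl | hp
    · rw [le_antisymm hpr hr]
      ring
    · field_simp

theorem convexOn_mul_phiR {r : ℝ} (hr : 0 ≤ r) : ConvexOn ℝ univ fun p => p * phiR r p := by
  simp_rw [mul_phiR hr]
  exact (convexOn_id convex_univ |>.sub (concaveOn_const r convex_univ)).sup
    (convexOn_const 0 convex_univ)

/-- for `r > 0`, `H¹_{φ_r}(p₁,p₂) ≥ 0` for all `p₁ ≥ p₂ ≥ 0`,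
`H²_{φ_r}(p₁,p₂) ≥ 0` for all `p₁, p₂ ≥ 0`, and `H¹_{φ_r}(p,p) = H²_{φ_r}(p,p)` for all
`p ≥ 0`. -/
theorem statement4 (r : ℝ) (hr : 0 < r) :
    (∀ p₁ p₂ : ℝ, 0 ≤ p₂ → p₂ ≤ p₁ → 0 ≤ H1 (phiR r) p₁ p₂) ∧
    (∀ p₁ p₂ : ℝ, 0 ≤ p₁ → 0 ≤ p₂ → 0 ≤ H2 (phiR r) p₁ p₂) ∧
    (∀ p : ℝ, 0 ≤ p → H1 (phiR r) p p = H2 (phiR r) p p) := by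
  have hφ := (convexOn_mul_phiR hr.le).subset (subset_univ _) (convex_Ici 0)
  exact ⟨fun _ _ h₂ h₁₂ => H1_nonneg_of_convexOn hφ h₂ h₁₂,
    fun _ _ h₁ h₂ => H2_nonneg_of_convexOn hφ h₁ h₂, fun p _ => H1_self _ p⟩
end
end

section
/- Let t ↦ ν(t) be a weak solution of the isotropic 3-wave kinetic equation for acoustic waves with initial datum ν₀. Then for every ρ ∈ (0,1) and every R ∈ (0,∞), one has ν(t)([R·ρ, ∞]) ≥ (1 − ρ) · ν₀([R, ∞]) for all t ∈ [0,∞). -/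
open MeasureTheory Filter Topology
open scoped ENNReal NNReal

noncomputable section

/-- Restriction of a test function on the extended half line `[0,∞] = ℝ≥0∞`
to the finite part `[0,∞)`. -/
def restr (φ : ℝ≥0∞ → ℝ) : ℝ → ℝ := fun p => φ (ENNReal.ofReal p)

/-- `K` is the continuous extension to `[0,∞]²` of `H¹_φ(p₁,p₂)/(p₁p₂)`. -/
def IsH1Ext (φ : ℝ≥0∞ → ℝ) (K : ℝ≥0∞ → ℝ≥0∞ → ℝ) : Prop :=
  Continuous (Function.uncurry K) ∧
    ∀ p₁ p₂ : ℝ, 0 < p₂ → p₂ < p₁ →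
      K (ENNReal.ofReal p₁) (ENNReal.ofReal p₂) = H1 (restr φ) p₁ p₂ / (p₁ * p₂)

/-- `K` is the continuous extension to `[0,∞]` of the diagonal kernel `H²_φ(p,p)/p²`. -/
def IsH2Ext (φ : ℝ≥0∞ → ℝ) (K : ℝ≥0∞ → ℝ) : Prop :=
  Continuous K ∧ ∀ p : ℝ, 0 < p → K (ENNReal.ofReal p) = H2 (restr φ) p p / (p * p)

/-- The collision terms
`2 ∬_{p₁>p₂≥0} K₁ dμ dμ + ∬_{p₁=p₂≥0} K₂ dμ dμ`. -/
def collInt (μ : Measure ℝ≥0∞) (K₁ : ℝ≥0∞ → ℝ≥0∞ → ℝ) (K₂ : ℝ≥0∞ → ℝ) : ℝ :=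
  2 * ∫ p₁, (∫ p₂, (if p₂ < p₁ then K₁ p₁ p₂ else 0) ∂μ) ∂μ
    + ∫ p₁, (∫ p₂, (if p₁ = p₂ then K₂ p₁ else 0) ∂μ) ∂μ

/-- The weak formulation of the isotropic 3-wave kinetic equation for acoustic waves for
one (time dependent) test function `φ` with time derivative `Dφ`: for every `t ≥ 0` and
every pair of continuous extensions `K₁ s, K₂ s` of the kernels `H¹_{φ(s,·)}/(p₁p₂)`,
`H²_{φ(s,·)}/(p₁p₂)` on `[0,t]`,
`∫ φ(t,·) dν(t) - ∫ φ(0,·) dν(0) = ∫₀ᵗ (∫ ∂ₛφ dν(s) + collision terms) ds`. -/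
def WeakIdentity (ν : ℝ → Measure ℝ≥0∞) (φ Dφ : ℝ → ℝ≥0∞ → ℝ) : Prop :=
  ∀ t : ℝ, 0 ≤ t →
    ∀ (K₁ : ℝ → ℝ≥0∞ → ℝ≥0∞ → ℝ) (K₂ : ℝ → ℝ≥0∞ → ℝ),
      (∀ s ∈ Set.Icc 0 t, IsH1Ext (φ s) (K₁ s)) →
      (∀ s ∈ Set.Icc 0 t, IsH2Ext (φ s) (K₂ s)) →
      (∫ p, φ t p ∂(ν t)) - (∫ p, φ 0 p ∂(ν 0))
        = ∫ s in (0 : ℝ)..t, ((∫ p, Dφ s p ∂(ν s)) + collInt (ν s) (K₁ s) (K₂ s))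

/-- A weak solution (in the sense of Definition 8 of the paper, case (i)) of the isotropic
3-wave kinetic equation for acoustic waves, written for the energy measure `ν(t)` on the
extended half line `[0,∞] = ℝ≥0∞`: `ν` is a weak-*-continuous family of finite nonnegative
measures with `ν(0) = ν₀` satisfying the weak formulation for all test functions
`φ ∈ C¹([0,∞); C([0,∞]))`. -/
structure IsWeakSolution (ν : ℝ → Measure ℝ≥0∞) (ν₀ : Measure ℝ≥0∞) : Prop where
  finite : ∀ t : ℝ, IsFiniteMeasure (ν t)
  init : ν 0 = ν₀
  weakStarCont : ∀ ψ : C(ℝ≥0∞, ℝ), ContinuousOn (fun t => ∫ p, ψ p ∂(ν t)) (Set.Ici 0)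
  eqn : ∀ φ Dφ : ℝ → C(ℝ≥0∞, ℝ),
    (∀ s : ℝ, HasDerivAt φ (Dφ s) s) → Continuous Dφ →
    WeakIdentity ν (fun s p => φ s p) (fun s p => Dφ s p)

/-- A solution is nontrivial when the initial energy is not entirely concentrated
at `{∞}`. -/
def NontrivialSol (ν₀ : Measure ℝ≥0∞) : Prop := 0 < ν₀ (Set.Iio ⊤)


/-!
Test the weak formulation with the time-independent `φ(p) = F(p) / p`, where `F` is a convex `C¹`
ramp with `F = 0` on `[0, a]` and `F(p) = p - (a + m) / 2` on `[m, ∞)`. For `F` convex with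
`F(0) = 0`, Jensen's inequality at the barycentre of `x ± y` together with the monotonicity of
`F(p) / p` makes `H¹_φ` (and `H²_φ`, its diagonal) nonnegative, so `∫ φ dν(t)` is nondecreasing.
The Lipschitz derivative of `F` is what lets `H¹_φ(p₁, p₂) / (p₁ p₂)` extend continuously to
`[0, ∞]²`. Since `(1 - (a + m) / (2R)) 𝟙_{[R, ∞]} ≤ φ ≤ 𝟙_{[a, ∞]}` for `m ≤ R`, taking `a = Rρ`
and letting `m ↓ Rρ` gives the bound.
-/

open Set Function

theorem hasDerivAt_max_zero_sq (x : ℝ) :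
    HasDerivAt (fun x : ℝ => max x 0 ^ 2) (2 * max x 0) x := by
  rcases lt_trichotomy x 0 with hx | rfl | hx
  · rw [max_eq_right hx.le, mul_zero]
    refine (hasDerivAt_const x (0 : ℝ)).congr_of_eventuallyEq ?_
    filter_upwards [Iio_mem_nhds hx] with y hy
    simp [max_eq_right (mem_Iio.mp hy).le]
  · have hleft : HasDerivWithinAt (fun x : ℝ => max x 0 ^ 2) 0 (Iic 0) 0 :=
      (hasDerivWithinAt_const 0 _ (0 : ℝ)).congr
        (fun y hy => by simp [max_eq_right (mem_Iic.mp hy)]) (by simp)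
    have hright : HasDerivWithinAt (fun x : ℝ => max x 0 ^ 2) 0 (Ici 0) 0 := by
      refine ((hasDerivAt_pow 2 (0 : ℝ)).hasDerivWithinAt.congr
        (fun y hy => by simp [max_eq_left (mem_Ici.mp hy)]) (by simp)).congr_deriv (by simp)
    have h := hleft.union hright
    rw [Iic_union_Ici, hasDerivWithinAt_univ] at h
    simpa using h
  · rw [max_eq_left hx.le]
    refine (hasDerivAt_pow 2 x).congr_of_eventuallyEq ?_ |>.congr_deriv (by ring)
    filter_upwards [Ioi_mem_nhds hx] with y hy
    simp [max_eq_left (mem_Ioi.mp hy).le]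

theorem secondDiff_max_zero_sq_mem (x h : ℝ) :
    max (x + h) 0 ^ 2 + max (x - h) 0 ^ 2 - 2 * max x 0 ^ 2 ∈ Icc 0 (2 * h ^ 2) := by
  simp only [mem_Icc, max_def]
  split_ifs <;> constructor <;>
    nlinarith [sq_nonneg h, sq_nonneg x, sq_nonneg (x + h), sq_nonneg (x - h)]

theorem ConvexOn.div_le_div_of_map_zero {F : ℝ → ℝ} (hF : ConvexOn ℝ (Ici 0) F) (h0 : F 0 = 0)
    {x y : ℝ} (hy : 0 < y) (hxy : y ≤ x) : F y / y ≤ F x / x := by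
  simpa [h0] using hF.secant_mono self_mem_Ici hy.le (hy.le.trans hxy) hy.ne'
    (hy.trans_le hxy).ne' hxy

theorem continuous_secondDiff_div {F : ℝ → ℝ} (hF : Continuous F) {C : ℝ}
    (hC : ∀ x y, |F (x + y) + F (x - y) - 2 * F x| ≤ C * y ^ 2) :
    Continuous fun q : ℝ × ℝ => (F (q.1 + q.2) + F (q.1 - q.2) - 2 * F q.1) / q.2 := by
  refine continuous_iff_continuousAt.2 fun ⟨x, y⟩ => ?_
  rcases eq_or_ne y 0 with rfl | hy
  · have hbound : ∀ q : ℝ × ℝ,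
        ‖(F (q.1 + q.2) + F (q.1 - q.2) - 2 * F q.1) / q.2‖ ≤ C * |q.2| := fun q => by
      rcases eq_or_ne q.2 0 with h | h
      · simp [h]
      · rw [norm_div, Real.norm_eq_abs, Real.norm_eq_abs, div_le_iff₀ (abs_pos.2 h)]
        simpa [mul_assoc, ← pow_two] using hC q.1 q.2
    have hlim : Tendsto (fun q : ℝ × ℝ => C * |q.2|) (𝓝 (x, 0)) (𝓝 0) := by
      have hc : Continuous fun q : ℝ × ℝ => C * |q.2| := by fun_prop
      simpa using hc.tendsto (x, 0)
    simpa [ContinuousAt] using squeeze_zero_norm hbound hlim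
  · exact ((hF.comp (by fun_prop)).add (hF.comp (by fun_prop)) |>.sub
      (continuous_const.mul (hF.comp continuous_fst))).continuousAt.div
        continuous_snd.continuousAt hy

theorem tendsto_toReal_inv_top : Tendsto (fun y : ℝ≥0∞ => y⁻¹.toReal) (𝓝 ⊤) (𝓝 0) := by
  have h := (ENNReal.tendsto_toReal (by simp : (⊤ : ℝ≥0∞)⁻¹ ≠ ⊤)).comp (continuous_inv.tendsto ⊤)
  rwa [ENNReal.inv_top, ENNReal.toReal_zero] at h

theorem ofReal_mul_le_of_forall_mem_Ioo {f : ℝ → ℝ} {x₀ x₁ : ℝ}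
    (hf : ContinuousWithinAt f (Ioi x₀) x₀) (hx : x₀ < x₁) {A B : ℝ≥0∞}
    (h : ∀ x ∈ Ioo x₀ x₁, ENNReal.ofReal (f x) * A ≤ B) : ENNReal.ofReal (f x₀) * A ≤ B := by
  rcases eq_or_ne (ENNReal.ofReal (f x₀)) 0 with h0 | h0
  · simp [h0]
  refine le_of_tendsto (ENNReal.Tendsto.mul_const
    ((ENNReal.continuous_ofReal.tendsto _).comp hf) (Or.inl h0)) ?_
  filter_upwards [Ioo_mem_nhdsGT hx] with x hx using h x hx

theorem MeasureTheory.Integrable.ofReal_mul_measure_le_integral {X : Type*} [MeasurableSpace X]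
    {μ : Measure X} {f : X → ℝ} (hf : Integrable f μ) (hf₀ : 0 ≤ f) {ε : ℝ} {s : Set X}
    (hs : ∀ x ∈ s, ε ≤ f x) : ENNReal.ofReal ε * μ s ≤ ENNReal.ofReal (∫ x, f x ∂μ) := by
  rw [ofReal_integral_eq_lintegral_ofReal hf (Eventually.of_forall hf₀)]
  calc ENNReal.ofReal ε * μ s
      ≤ ENNReal.ofReal ε * μ {x | ENNReal.ofReal ε ≤ ENNReal.ofReal (f x)} :=
        mul_le_mul_right (measure_mono fun x hx => ENNReal.ofReal_le_ofReal (hs x hx)) _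
    _ ≤ ∫⁻ x, ENNReal.ofReal (f x) ∂μ :=
        mul_meas_ge_le_lintegral₀ hf.1.aemeasurable.ennreal_ofReal _

def collisionForm (F : ℝ → ℝ) (x y : ℝ) : ℝ :=
  (x + y) ^ 2 * F (x + y) + (x - y) ^ 2 * F (x - y) - 2 * (x ^ 2 + y ^ 2) * F x
    - 4 * (x * y) * F y

section collisionForm

variable {φ F : ℝ → ℝ}

theorem H1_eq_collisionForm (hφ : ∀ t, 0 < t → φ t = F t / t) {x y : ℝ} (hy : 0 < y)
    (hxy : y < x) : H1 φ x y = collisionForm F x y := by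
  have hx : 0 < x := hy.trans hxy
  have hxy' : 0 < x - y := sub_pos.2 hxy
  rw [H1, collisionForm, hφ _ (add_pos hx hy), hφ _ hx, hφ _ hy, hφ _ hxy']
  field_simp
  ring

theorem H2_eq_collisionForm (hφ : ∀ t, 0 < t → φ t = F t / t) {p : ℝ} (hp : 0 < p) :
    H2 φ p p = collisionForm F p p := by
  rw [H2, collisionForm, hφ _ (add_pos hp hp), hφ _ hp]
  field_simp
  ring

theorem collisionForm_nonneg (hF : ConvexOn ℝ (Ici 0) F) (h0 : F 0 = 0) {x y : ℝ} (hy : 0 ≤ y)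
    (hxy : y ≤ x) : 0 ≤ collisionForm F x y := by
  rcases hy.eq_or_lt with rfl | hy
  · exact le_of_eq (by simp only [collisionForm, add_zero, sub_zero]; ring)
  have hx : 0 < x := hy.trans_le hxy
  have hs : 0 < x ^ 2 + y ^ 2 := by positivity
  -- `b` is the barycentre of `x ± y` with weights `(x ± y)² / (2 (x² + y²))`.
  obtain ⟨b, hb⟩ : ∃ b, b * (x ^ 2 + y ^ 2) = x * (x ^ 2 + 3 * y ^ 2) :=
    ⟨_, div_mul_cancel₀ _ hs.ne'⟩
  have hxb : x ≤ b := le_of_mul_le_mul_right (by nlinarith) hs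
  have jensen : 2 * (x ^ 2 + y ^ 2) * F b ≤ (x + y) ^ 2 * F (x + y) + (x - y) ^ 2 * F (x - y) := by
    have h := hF.2 (mem_Ici.2 (by linarith : 0 ≤ x + y)) (mem_Ici.2 (by linarith : 0 ≤ x - y))
      (by positivity : 0 ≤ (x + y) ^ 2 / (2 * (x ^ 2 + y ^ 2)))
      (by positivity : 0 ≤ (x - y) ^ 2 / (2 * (x ^ 2 + y ^ 2))) (by field_simp; ring)
    rw [smul_eq_mul, smul_eq_mul, smul_eq_mul, smul_eq_mul,
      show (x + y) ^ 2 / (2 * (x ^ 2 + y ^ 2)) * (x + y)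
        + (x - y) ^ 2 / (2 * (x ^ 2 + y ^ 2)) * (x - y) = b by
        field_simp; linear_combination (-2) * hb] at h
    calc 2 * (x ^ 2 + y ^ 2) * F b
        ≤ 2 * (x ^ 2 + y ^ 2) * ((x + y) ^ 2 / (2 * (x ^ 2 + y ^ 2)) * F (x + y)
          + (x - y) ^ 2 / (2 * (x ^ 2 + y ^ 2)) * F (x - y)) := by gcongr
      _ = _ := by field_simp
  have slope_b : F x / x ≤ F b / b := hF.div_le_div_of_map_zero h0 hx hxb
  have slope_y : F y / y ≤ F x / x := hF.div_le_div_of_map_zero h0 hy hxy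
  rw [div_le_div_iff₀ hx (hx.trans_le hxb)] at slope_b
  rw [div_le_div_iff₀ hy hx] at slope_y
  have key : (x ^ 2 + 3 * y ^ 2) * F x ≤ (x ^ 2 + y ^ 2) * F b := by
    refine le_of_mul_le_mul_right ?_ hx
    linear_combination mul_le_mul_of_nonneg_right slope_b hs.le - F x * hb
  unfold collisionForm
  linarith [mul_le_mul_of_nonneg_left slope_y (by positivity : 0 ≤ 4 * y)]

end collisionForm

theorem collInt_nonneg (μ : Measure ℝ≥0∞) {K₁ : ℝ≥0∞ → ℝ≥0∞ → ℝ} {K₂ : ℝ≥0∞ → ℝ}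
    (hK₁ : ∀ x y, 0 ≤ K₁ x y) (hK₂ : ∀ x, 0 ≤ K₂ x) : 0 ≤ collInt μ K₁ K₂ := by
  unfold collInt
  refine add_nonneg (mul_nonneg zero_le_two ?_) ?_ <;>
  refine integral_nonneg fun x => integral_nonneg fun y => ?_ <;>
  dsimp only <;> split_ifs <;> simp [hK₁, hK₂]

theorem IsWeakSolution.integral_le_integral {ν : ℝ → Measure ℝ≥0∞} {ν₀ : Measure ℝ≥0∞}
    (hsol : IsWeakSolution ν ν₀) (φ : C(ℝ≥0∞, ℝ)) {K₁ : ℝ≥0∞ → ℝ≥0∞ → ℝ} {K₂ : ℝ≥0∞ → ℝ}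
    (h₁ : IsH1Ext φ K₁) (h₂ : IsH2Ext φ K₂) (hK₁ : ∀ x y, 0 ≤ K₁ x y) (hK₂ : ∀ x, 0 ≤ K₂ x)
    {t : ℝ} (ht : 0 ≤ t) : ∫ p, φ p ∂ν 0 ≤ ∫ p, φ p ∂ν t := by
  have h := hsol.eqn (fun _ => φ) (fun _ => 0) (fun s => hasDerivAt_const s φ) continuous_const
    t ht (fun _ => K₁) (fun _ => K₂) (fun _ _ => h₁) (fun _ _ => h₂)
  have hrhs : 0 ≤ ∫ s in (0 : ℝ)..t, ((∫ p, (0 : C(ℝ≥0∞, ℝ)) p ∂ν s) + collInt (ν s) K₁ K₂) :=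
    intervalIntegral.integral_nonneg ht fun s _ => by simpa using collInt_nonneg (ν s) hK₁ hK₂
  linarith

namespace AcousticWave

/-- The `C¹` ramp vanishing on `(-∞, a]`, quadratic on `[a, m]` and equal to `p - (a + m) / 2`
on `[m, ∞)`. -/
def smoothRamp (a m p : ℝ) : ℝ := (max (p - a) 0 ^ 2 - max (p - m) 0 ^ 2) / (2 * (m - a))

section smoothRamp

variable {a m : ℝ}

theorem continuous_smoothRamp : Continuous (smoothRamp a m) := by
  unfold smoothRamp
  fun_prop

variable (ham : a < m)
include ham

theorem smoothRamp_of_le {p : ℝ} (hp : p ≤ a) : smoothRamp a m p = 0 := by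
  simp [smoothRamp, max_eq_right (sub_nonpos.2 hp), max_eq_right (by linarith : p - m ≤ 0)]

theorem smoothRamp_of_ge {p : ℝ} (hp : m ≤ p) : smoothRamp a m p = p - (a + m) / 2 := by
  rw [smoothRamp, max_eq_left (by linarith), max_eq_left (by linarith),
    div_eq_iff (by linarith)]
  ring

theorem smoothRamp_nonneg (p : ℝ) : 0 ≤ smoothRamp a m p := by
  refine div_nonneg ?_ (by linarith)
  simp only [max_def]
  split_ifs <;> nlinarith

theorem smoothRamp_le_self (ha : 0 ≤ a) {p : ℝ} (hp : 0 ≤ p) : smoothRamp a m p ≤ p := by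
  rw [smoothRamp, div_le_iff₀ (by linarith)]
  simp only [max_def]
  split_ifs <;> nlinarith

theorem sub_le_smoothRamp (p : ℝ) : p - (a + m) / 2 ≤ smoothRamp a m p := by
  rw [smoothRamp, le_div_iff₀ (by linarith)]
  simp only [max_def]
  split_ifs <;> nlinarith

theorem convexOn_smoothRamp : ConvexOn ℝ univ (smoothRamp a m) := by
  have hderiv (p : ℝ) : HasDerivAt (smoothRamp a m)
      ((max (p - a) 0 - max (p - m) 0) / (m - a)) p := by
    have h := (((hasDerivAt_max_zero_sq _).comp p ((hasDerivAt_id p).sub_const a)).sub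
      ((hasDerivAt_max_zero_sq _).comp p ((hasDerivAt_id p).sub_const m))).div_const
      (2 * (m - a))
    refine h.congr_deriv ?_
    have : m - a ≠ 0 := (sub_pos.2 ham).ne'
    simp only [id]
    field_simp
  refine Monotone.convexOn_univ_of_deriv (fun p => (hderiv p).differentiableAt) ?_
  rw [show deriv (smoothRamp a m) = _ from funext fun p => (hderiv p).deriv]
  intro p q hpq
  refine div_le_div_of_nonneg_right ?_ (by linarith)
  simp only [max_def]
  split_ifs <;> linarith

theorem abs_secondDiff_smoothRamp_le (x y : ℝ) :
    |smoothRamp a m (x + y) + smoothRamp a m (x - y) - 2 * smoothRamp a m x| ≤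
      (m - a)⁻¹ * y ^ 2 := by
  obtain ⟨ha₁, ha₂⟩ := secondDiff_max_zero_sq_mem (x - a) y
  obtain ⟨hm₁, hm₂⟩ := secondDiff_max_zero_sq_mem (x - m) y
  have hma : 0 < m - a := sub_pos.2 ham
  rw [abs_le]
  simp only [smoothRamp, show x + y - a = x - a + y by ring, show x - y - a = x - a - y by ring,
    show x + y - m = x - m + y by ring, show x - y - m = x - m - y by ring]
  constructor
  · rw [← sub_nonneg]
    field_simp
    nlinarith
  · rw [← sub_nonneg]
    field_simp
    nlinarith

theorem continuous_smoothRamp_div_self (ha : 0 < a) :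
    Continuous fun t => smoothRamp a m t / t := by
  refine continuous_iff_continuousAt.2 fun t => ?_
  rcases eq_or_ne t 0 with rfl | ht
  · refine continuousAt_const.congr (f := fun _ => (0 : ℝ)) ?_
    filter_upwards [Iio_mem_nhds ha] with s hs
    rw [smoothRamp_of_le ham (mem_Iio.1 hs).le, zero_div]
  · exact continuous_smoothRamp.continuousAt.div continuousAt_id ht

end smoothRamp

def kernel (a m x y : ℝ) : ℝ := collisionForm (smoothRamp a m) x y / (x * y)

section kernel

variable {a m : ℝ} (ham : a < m)
include ham

theorem kernel_nonneg (ha : 0 ≤ a) {x y : ℝ} (hy : 0 ≤ y) (hxy : y ≤ x) : 0 ≤ kernel a m x y :=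
  div_nonneg (collisionForm_nonneg ((convexOn_smoothRamp ham).subset (subset_univ _)
    (convex_Ici 0)) (smoothRamp_of_le ham ha) hy hxy) (mul_nonneg (hy.trans hxy) hy)

theorem kernel_eq_of_ne_zero (ha : 0 ≤ a) {x : ℝ} (hx : x ≠ 0) (y : ℝ) :
    kernel a m x y = (x ^ 2 + y ^ 2) / x *
        ((smoothRamp a m (x + y) + smoothRamp a m (x - y) - 2 * smoothRamp a m x) / y)
      + 2 * (smoothRamp a m (x + y) - smoothRamp a m (x - y)) - 4 * smoothRamp a m y := by
  rcases eq_or_ne y 0 with rfl | hy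
  · simp [kernel, smoothRamp_of_le ham ha]
  · rw [kernel, collisionForm]
    field_simp
    ring

theorem continuousAt_kernel_of_ne_zero (ha : 0 ≤ a) {x : ℝ} (hx : x ≠ 0) (y : ℝ) :
    ContinuousAt (uncurry (kernel a m)) (x, y) := by
  have hF : Continuous (smoothRamp a m) := continuous_smoothRamp
  have hG := continuous_secondDiff_div hF (abs_secondDiff_smoothRamp_le ham)
  have hquot : ContinuousAt (fun q : ℝ × ℝ => (q.1 ^ 2 + q.2 ^ 2) / q.1) (x, y) :=
    (by fun_prop : Continuous fun q : ℝ × ℝ => q.1 ^ 2 + q.2 ^ 2).continuousAt.div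
      continuous_fst.continuousAt hx
  have hrest : Continuous fun q : ℝ × ℝ =>
      2 * (smoothRamp a m (q.1 + q.2) - smoothRamp a m (q.1 - q.2)) - 4 * smoothRamp a m q.2 := by
    fun_prop
  refine ((hquot.mul hG.continuousAt).add hrest.continuousAt).congr ?_
  filter_upwards [(isOpen_ne_fun continuous_fst continuous_const).mem_nhds hx] with q hq
  rw [uncurry_apply_pair, kernel_eq_of_ne_zero ham ha hq, Pi.add_apply, Pi.mul_apply]
  ring

theorem continuousAt_kernel_zero (ha : 0 < a) : ContinuousAt (uncurry (kernel a m)) (0, 0) := by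
  refine (continuousAt_const (y := (0 : ℝ))).congr ?_
  filter_upwards [Metric.ball_mem_nhds ((0 : ℝ), (0 : ℝ)) (half_pos ha)] with q hq
  rw [Metric.mem_ball, Prod.dist_eq, max_lt_iff, Real.dist_eq, Real.dist_eq, sub_zero,
    sub_zero, abs_lt, abs_lt] at hq
  have hF {p : ℝ} (hp : p < a) : smoothRamp a m p = 0 := smoothRamp_of_le ham hp.le
  rw [uncurry_apply_pair, kernel, collisionForm, hF (by linarith), hF (by linarith),
    hF (by linarith), hF (by linarith)]
  simp

theorem kernel_of_add_le (ha : 0 ≤ a) {x y : ℝ} (hy : 0 ≤ y) (hyx : y + m ≤ x) :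
    kernel a m x y = 4 * (y - smoothRamp a m y) := by
  rcases hy.eq_or_lt with rfl | hy
  · simp [kernel, smoothRamp_of_le ham ha]
  have hx : 0 < x := by linarith
  rw [kernel, collisionForm, smoothRamp_of_ge ham (by linarith : m ≤ x + y),
    smoothRamp_of_ge ham (by linarith : m ≤ x - y), smoothRamp_of_ge ham (by linarith : m ≤ x)]
  field_simp
  ring

theorem abs_kernel_sub_le (ha : 0 ≤ a) {x y : ℝ} (hmy : m ≤ y) (hyx : y ≤ x) (hxy : x ≤ y + m) :
    |kernel a m x y - 2 * (a + m)| ≤ m * (a + m) / y := by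
  have hy : 0 < y := by linarith
  have hx : 0 < x := by linarith
  have hid : kernel a m x y - 2 * (a + m) =
      (x - y) ^ 2 * (smoothRamp a m (x - y) - (x - y) + (a + m) / 2) / (x * y) := by
    rw [kernel, collisionForm, smoothRamp_of_ge ham (by linarith : m ≤ x + y),
      smoothRamp_of_ge ham (by linarith : m ≤ x), smoothRamp_of_ge ham hmy]
    field_simp
    ring
  have hδ₀ : 0 ≤ smoothRamp a m (x - y) - (x - y) + (a + m) / 2 := by
    linarith [sub_le_smoothRamp ham (x - y)]
  have hδ₁ : smoothRamp a m (x - y) - (x - y) + (a + m) / 2 ≤ (a + m) / 2 := by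
    linarith [smoothRamp_le_self ham ha (sub_nonneg.2 hyx)]
  have hu : (x - y) ^ 2 ≤ m * x := by nlinarith
  rw [hid, abs_of_nonneg (by positivity), div_le_div_iff₀ (by positivity) hy]
  calc (x - y) ^ 2 * (smoothRamp a m (x - y) - (x - y) + (a + m) / 2) * y
      ≤ m * x * ((a + m) / 2) * y := by gcongr; exact mul_nonneg (by linarith) hx.le
    _ ≤ m * (a + m) * (x * y) := by nlinarith [mul_pos (mul_pos hx hy) (by linarith : 0 < m)]

end kernel

/-- The continuous extension of `kernel a m` to `{y ≤ x} ⊆ [0, ∞]²`. Once `x ≥ y + m` the kernel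
no longer depends on `x` (`kernel_of_add_le`), so truncating `x` at `y + m` extends it to
`x = ∞`; on the diagonal at infinity it tends to `2 (a + m)` (`abs_kernel_sub_le`). -/
def kernelExt (a m : ℝ) (x y : ℝ≥0∞) : ℝ :=
  if y = ⊤ then 2 * (a + m) else kernel a m (min x (y + ENNReal.ofReal m)).toReal y.toReal

def kernelSymm (a m : ℝ) (p₁ p₂ : ℝ≥0∞) : ℝ := kernelExt a m (max p₁ p₂) (min p₁ p₂)

def testFn (a m : ℝ) (p : ℝ≥0∞) : ℝ :=
  if p = ⊤ then 1 else smoothRamp a m p.toReal / p.toReal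

theorem restr_testFn (a m t : ℝ) (ht : 0 < t) :
    restr (testFn a m) t = smoothRamp a m t / t := by
  simp [restr, testFn, ENNReal.toReal_ofReal ht.le]

section extension

variable {a m : ℝ} (ham : a < m)
include ham

theorem kernelExt_ofReal (ha : 0 ≤ a) {x y : ℝ} (hy : 0 ≤ y) (hyx : y ≤ x) :
    kernelExt a m (ENNReal.ofReal x) (ENNReal.ofReal y) = kernel a m x y := by
  rw [kernelExt, if_neg ENNReal.ofReal_ne_top, ← ENNReal.ofReal_add hy (by linarith),
    ← ENNReal.ofReal_min, ENNReal.toReal_ofReal (le_min (hy.trans hyx) (by linarith)),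
    ENNReal.toReal_ofReal hy]
  rcases le_total x (y + m) with hx | hx
  · rw [min_eq_left hx]
  · rw [min_eq_right hx, kernel_of_add_le ham ha hy hx, kernel_of_add_le ham ha hy le_rfl]

theorem kernelExt_nonneg (ha : 0 ≤ a) {x y : ℝ≥0∞} (hyx : y ≤ x) : 0 ≤ kernelExt a m x y := by
  rw [kernelExt]
  split_ifs with hy
  · linarith
  have hmin : min x (y + ENNReal.ofReal m) ≠ ⊤ :=
    ne_top_of_le_ne_top (ENNReal.add_ne_top.2 ⟨hy, ENNReal.ofReal_ne_top⟩) (min_le_right _ _)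
  exact kernel_nonneg ham ha ENNReal.toReal_nonneg
    (ENNReal.toReal_mono hmin (le_min hyx le_self_add))

theorem abs_kernelExt_sub_le (ha : 0 ≤ a) {x y : ℝ≥0∞} (hyx : y ≤ x)
    (hmy : ENNReal.ofReal m ≤ y) :
    |kernelExt a m x y - 2 * (a + m)| ≤ m * (a + m) * y⁻¹.toReal := by
  have hm : 0 < m := by linarith
  rw [kernelExt]
  split_ifs with hy
  · simp [hy]
  have hym : y + ENNReal.ofReal m ≠ ⊤ := ENNReal.add_ne_top.2 ⟨hy, ENNReal.ofReal_ne_top⟩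
  have hmin : min x (y + ENNReal.ofReal m) ≠ ⊤ := ne_top_of_le_ne_top hym (min_le_right _ _)
  have hmy' : m ≤ y.toReal := (ENNReal.ofReal_le_iff_le_toReal hy).1 hmy
  have hxy : (min x (y + ENNReal.ofReal m)).toReal ≤ y.toReal + m := by
    have h := ENNReal.toReal_mono hym (min_le_right x _)
    rwa [ENNReal.toReal_add hy ENNReal.ofReal_ne_top, ENNReal.toReal_ofReal hm.le] at h
  rw [ENNReal.toReal_inv, ← div_eq_mul_inv]
  exact abs_kernel_sub_le ham ha hmy' (ENNReal.toReal_mono hmin (le_min hyx le_self_add)) hxy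

theorem continuousAt_kernelExt (ha : 0 < a) {x y : ℝ≥0∞} (hy : y ≠ ⊤) (hyx : y ≤ x) :
    ContinuousAt (uncurry (kernelExt a m)) (x, y) := by
  have hm : 0 < m := ha.trans ham
  let τ : ℝ≥0∞ × ℝ≥0∞ → ℝ × ℝ := fun q => ((min q.1 (q.2 + ENNReal.ofReal m)).toReal, q.2.toReal)
  have hmin : min x (y + ENNReal.ofReal m) ≠ ⊤ :=
    ne_top_of_le_ne_top (ENNReal.add_ne_top.2 ⟨hy, ENNReal.ofReal_ne_top⟩) (min_le_right _ _)
  have h₁ : ContinuousAt (ENNReal.toReal ∘ fun q : ℝ≥0∞ × ℝ≥0∞ =>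
      min q.1 (q.2 + ENNReal.ofReal m)) (x, y) :=
    ContinuousAt.comp (f := fun q : ℝ≥0∞ × ℝ≥0∞ => min q.1 (q.2 + ENNReal.ofReal m))
      (ENNReal.continuousAt_toReal hmin) (by fun_prop : Continuous _).continuousAt
  have h₂ : ContinuousAt (ENNReal.toReal ∘ Prod.snd) (x, y) :=
    (ENNReal.continuousAt_toReal hy).comp continuous_snd.continuousAt
  have hτ : ContinuousAt τ (x, y) := h₁.prodMk h₂
  have hk : ContinuousAt (uncurry (kernel a m)) (τ (x, y)) := by
    rcases eq_or_ne x 0 with rfl | hx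
    · obtain rfl : y = 0 := le_zero_iff.1 hyx
      simpa [τ] using continuousAt_kernel_zero ham ha
    · refine continuousAt_kernel_of_ne_zero ham ha.le (ENNReal.toReal_pos ?_ hmin).ne' _
      exact (lt_min (pos_iff_ne_zero.2 hx) ((ENNReal.ofReal_pos.2 hm).trans_le le_add_self)).ne'
  refine (hk.comp hτ).congr ?_
  filter_upwards [(isOpen_ne_fun continuous_snd continuous_const).mem_nhds hy] with q hq
  change kernel a m _ _ = kernelExt a m q.1 q.2
  rw [kernelExt, if_neg hq]

theorem continuousWithinAt_kernelExt_top (ha : 0 ≤ a) :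
    ContinuousWithinAt (uncurry (kernelExt a m)) {q | q.2 ≤ q.1} (⊤, ⊤) := by
  have hbound : Tendsto (fun q : ℝ≥0∞ × ℝ≥0∞ => m * (a + m) * q.2⁻¹.toReal)
      (𝓝[{q | q.2 ≤ q.1}] (⊤, ⊤)) (𝓝 0) := by
    simpa using ((tendsto_toReal_inv_top.comp (continuous_snd.tendsto (⊤, ⊤))).const_mul
      (m * (a + m))).mono_left nhdsWithin_le_nhds
  rw [ContinuousWithinAt, tendsto_iff_norm_sub_tendsto_zero]
  refine squeeze_zero_norm' ?_ hbound
  filter_upwards [self_mem_nhdsWithin, mem_nhdsWithin_of_mem_nhds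
    ((isOpen_lt continuous_const continuous_snd).mem_nhds
      (ENNReal.ofReal_lt_top : ENNReal.ofReal m < ⊤))] with q hyx hmy
  rw [norm_norm, Real.norm_eq_abs]
  exact abs_kernelExt_sub_le ham ha hyx hmy.le

theorem continuousOn_kernelExt (ha : 0 < a) :
    ContinuousOn (uncurry (kernelExt a m)) {q | q.2 ≤ q.1} := by
  rintro ⟨x, y⟩ hyx
  rcases eq_or_ne y ⊤ with rfl | hy
  · obtain rfl : x = ⊤ := top_le_iff.1 hyx
    exact continuousWithinAt_kernelExt_top ham ha.le
  · exact (continuousAt_kernelExt ham ha hy hyx).continuousWithinAt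

theorem continuous_kernelSymm (ha : 0 < a) : Continuous (uncurry (kernelSymm a m)) := by
  have h := (continuousOn_kernelExt ham ha).comp_continuous
    (f := fun q : ℝ≥0∞ × ℝ≥0∞ => (max q.1 q.2, min q.1 q.2)) (by fun_prop)
    fun q => (min_le_max : min q.1 q.2 ≤ max q.1 q.2)
  exact h

theorem kernelSymm_nonneg (ha : 0 ≤ a) (p₁ p₂ : ℝ≥0∞) : 0 ≤ kernelSymm a m p₁ p₂ :=
  kernelExt_nonneg ham ha min_le_max

theorem isH1Ext_kernelSymm (ha : 0 < a) : IsH1Ext (testFn a m) (kernelSymm a m) := by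
  refine ⟨continuous_kernelSymm ham ha, fun x y hy hyx => ?_⟩
  have hle : ENNReal.ofReal y ≤ ENNReal.ofReal x := ENNReal.ofReal_le_ofReal hyx.le
  rw [kernelSymm, max_eq_left hle, min_eq_right hle, kernelExt_ofReal ham ha.le hy.le hyx.le,
    kernel, H1_eq_collisionForm (restr_testFn a m) hy hyx]

theorem isH2Ext_kernelSymm (ha : 0 < a) : IsH2Ext (testFn a m) fun p => kernelSymm a m p p := by
  refine ⟨(continuous_kernelSymm ham ha).comp (by fun_prop : Continuous fun p : ℝ≥0∞ => (p, p)),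
    fun p hp => ?_⟩
  simp only [kernelSymm, max_self, min_self]
  rw [kernelExt_ofReal ham ha.le hp.le le_rfl, kernel,
    H2_eq_collisionForm (restr_testFn a m) hp]

theorem continuous_testFn (ha : 0 < a) : Continuous (testFn a m) := by
  refine continuous_iff_continuousAt.2 fun p => ?_
  rcases eq_or_ne p ⊤ with rfl | hp
  · have hlim : ContinuousAt (fun p : ℝ≥0∞ => 1 - (a + m) / 2 * p⁻¹.toReal) ⊤ := by
      simpa [ContinuousAt] using (tendsto_toReal_inv_top.const_mul ((a + m) / 2)).const_sub 1
    refine hlim.congr ?_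
    filter_upwards [(isOpen_lt continuous_const continuous_id).mem_nhds
      (ENNReal.ofReal_lt_top : ENNReal.ofReal m < ⊤)] with p hmp
    rcases eq_or_ne p ⊤ with rfl | hp
    · simp [testFn]
    · have hmp' : m < p.toReal := (ENNReal.ofReal_lt_iff_lt_toReal (by linarith) hp).1 hmp
      have : p.toReal ≠ 0 := by linarith
      rw [testFn, if_neg hp, smoothRamp_of_ge ham hmp'.le, ENNReal.toReal_inv]
      field_simp
  · refine ((continuous_smoothRamp_div_self ham ha).continuousAt.comp
      (ENNReal.continuousAt_toReal hp)).congr ?_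
    filter_upwards [(isOpen_ne_fun continuous_id continuous_const).mem_nhds hp] with q hq
    simp [testFn, show q ≠ ⊤ from hq]

theorem testFn_nonneg (p : ℝ≥0∞) : 0 ≤ testFn a m p := by
  rw [testFn]
  split_ifs
  · exact zero_le_one
  · exact div_nonneg (smoothRamp_nonneg ham _) ENNReal.toReal_nonneg

theorem testFn_le_one (ha : 0 ≤ a) (p : ℝ≥0∞) : testFn a m p ≤ 1 := by
  rw [testFn]
  split_ifs
  · exact le_rfl
  · exact div_le_one_of_le₀ (smoothRamp_le_self ham ha ENNReal.toReal_nonneg) ENNReal.toReal_nonneg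

theorem testFn_eq_zero {p : ℝ≥0∞} (hp : p < ENNReal.ofReal a) : testFn a m p = 0 := by
  rw [testFn, if_neg hp.ne_top, smoothRamp_of_le ham (ENNReal.toReal_lt_of_lt_ofReal hp).le,
    zero_div]

theorem le_testFn (ha : 0 ≤ a) {R : ℝ} (hmR : m ≤ R) {p : ℝ≥0∞} (hp : ENNReal.ofReal R ≤ p) :
    1 - (a + m) / (2 * R) ≤ testFn a m p := by
  have hR : 0 < R := by linarith
  rw [testFn]
  split_ifs with htop
  · linarith [div_nonneg (by linarith : 0 ≤ a + m) (by linarith : 0 ≤ 2 * R)]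
  have hRp : R ≤ p.toReal := (ENNReal.ofReal_le_iff_le_toReal htop).1 hp
  rw [smoothRamp_of_ge ham (hmR.trans hRp), le_div_iff₀ (hR.trans_le hRp)]
  have : (a + m) / 2 ≤ (a + m) / (2 * R) * p.toReal := by
    rw [div_mul_eq_mul_div, le_div_iff₀ (by linarith)]
    nlinarith
  linarith

end extension

end AcousticWave

open AcousticWave in
theorem IsWeakSolution.ofReal_mul_measure_Ici_le {ν : ℝ → Measure ℝ≥0∞} {ν₀ : Measure ℝ≥0∞}
    (hsol : IsWeakSolution ν ν₀) {a m R : ℝ} (ha : 0 < a) (ham : a < m) (hmR : m ≤ R) {t : ℝ}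
    (ht : 0 ≤ t) :
    ENNReal.ofReal (1 - (a + m) / (2 * R)) * ν 0 (Ici (ENNReal.ofReal R)) ≤
      ν t (Ici (ENNReal.ofReal a)) := by
  have := hsol.finite 0
  let φ : C(ℝ≥0∞, ℝ) := ⟨testFn a m, continuous_testFn ham ha⟩
  have hint : Integrable φ (ν 0) := (BoundedContinuousFunction.mkOfCompact φ).integrable _
  calc ENNReal.ofReal (1 - (a + m) / (2 * R)) * ν 0 (Ici (ENNReal.ofReal R))
      ≤ ENNReal.ofReal (∫ p, φ p ∂ν 0) :=
        hint.ofReal_mul_measure_le_integral (testFn_nonneg ham) fun p hp =>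
          le_testFn ham ha.le hmR hp
    _ ≤ ENNReal.ofReal (∫ p, φ p ∂ν t) :=
        ENNReal.ofReal_le_ofReal (hsol.integral_le_integral φ (isH1Ext_kernelSymm ham ha)
          (isH2Ext_kernelSymm ham ha) (kernelSymm_nonneg ham ha.le)
          (fun p => kernelSymm_nonneg ham ha.le p p) ht)
    _ ≤ ν t (Ici (ENNReal.ofReal a)) :=
        integral_le_measure (fun p _ => testFn_le_one ham ha.le p)
          fun p hp => (testFn_eq_zero ham (not_le.1 hp)).le

theorem statement10_general (ν₀ : Measure ℝ≥0∞)
    (ν : ℝ → Measure ℝ≥0∞) (hsol : IsWeakSolution ν ν₀)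
    (ρ : ℝ) (hρ₀ : 0 < ρ) (hρ₁ : ρ < 1) (R : ℝ) (hR : 0 < R) :
    ∀ t : ℝ, 0 ≤ t →
      ENNReal.ofReal (1 - ρ) * ν₀ (Set.Ici (ENNReal.ofReal R))
        ≤ ν t (Set.Ici (ENNReal.ofReal (R * ρ))) := by
  intro t ht
  have ha : 0 < R * ρ := mul_pos hR hρ₀
  have haR : R * ρ < R := mul_lt_of_lt_one_right hR hρ₁
  rw [show 1 - ρ = 1 - (R * ρ + R * ρ) / (2 * R) by field_simp; ring, ← hsol.init]
  refine ofReal_mul_le_of_forall_mem_Ioo (f := fun m => 1 - (R * ρ + m) / (2 * R))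
    (by fun_prop : Continuous _).continuousWithinAt haR fun m hm => ?_
  exact hsol.ofReal_mul_measure_Ici_le ha hm.1 hm.2.le ht

/-- for every weak solution, every `ρ ∈ (0,1)` and `R ∈ (0,∞)`,
`ν(t)([Rρ,∞]) ≥ (1-ρ)·ν₀([R,∞])` for all `t ≥ 0`. -/
theorem statement10 (ν₀ : Measure ℝ≥0∞) [IsFiniteMeasure ν₀]
    (ν : ℝ → Measure ℝ≥0∞) (hsol : IsWeakSolution ν ν₀)
    (ρ : ℝ) (hρ₀ : 0 < ρ) (hρ₁ : ρ < 1) (R : ℝ) (hR : 0 < R) :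
    ∀ t : ℝ, 0 ≤ t →
      ENNReal.ofReal (1 - ρ) * ν₀ (Set.Ici (ENNReal.ofReal R))
        ≤ ν t (Set.Ici (ENNReal.ofReal (R * ρ))) :=
  statement10_general ν₀ ν hsol ρ hρ₀ hρ₁ R hR
end
end

section
/- Let t ↦ ν(t) be a nontrivial weak solution of the isotropic 3-wave kinetic equation for acoustic waves with initial datum ν₀ satisfying ν₀({0}) = 0, and set E = ν₀([0,∞]). Then for every ε ∈ (0,1) there exists R_ε > 0 such that ν(t)([0, R_ε)) ≤ ε·E for all t ∈ [0,∞); that is, the energy is transferred away from the origin uniformly in time. -/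
/-!
The stationary test function `φ_c(p) = 1/(1+cp)` has nonpositive collision kernels
(`H¹_φ ≤ 0` for `p₁ > p₂` and `H²_φ ≤ 0`), so `∫ φ_c dν(t) ≤ ∫ φ_c dν₀` for every `t ≥ 0`.
As `φ_c ≥ 1/2` on `[0, 1/c)`, this gives `ν(t)([0, 1/c)) ≤ 2 ∫ φ_c dν₀`, and by dominated
convergence `∫ φ_c dν₀ → ν₀({0}) = 0` as `c → ∞`.
-/

open MeasureTheory Filter Topology
open scoped ENNReal NNReal

noncomputable section

lemma H1_comp_mul (φ : ℝ → ℝ) {c : ℝ} (hc : c ≠ 0) (a b : ℝ) :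
    H1 (fun p => φ (c * p)) a b = H1 φ (c * a) (c * b) / c ^ 3 := by
  simp only [H1, mul_add, mul_sub]
  field_simp

lemma H2_comp_mul (φ : ℝ → ℝ) {c : ℝ} (hc : c ≠ 0) (a b : ℝ) :
    H2 (fun p => φ (c * p)) a b = H2 φ (c * a) (c * b) / c ^ 3 := by
  simp only [H2, mul_add]
  field_simp

lemma restr_comp_ofReal_mul (φ : ℝ≥0∞ → ℝ) {c : ℝ} (hc : 0 ≤ c) :
    restr (fun x => φ (ENNReal.ofReal c * x)) = fun p => restr φ (c * p) := by
  funext p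
  simp only [restr, ENNReal.ofReal_mul hc]

lemma IsH1Ext.comp_ofReal_mul {φ : ℝ≥0∞ → ℝ} {K : ℝ≥0∞ → ℝ≥0∞ → ℝ} (hK : IsH1Ext φ K)
    {c : ℝ} (hc : 0 < c) :
    IsH1Ext (fun x => φ (ENNReal.ofReal c * x))
      (fun x y => c⁻¹ * K (ENNReal.ofReal c * x) (ENNReal.ofReal c * y)) := by
  have hmul := ENNReal.continuous_const_mul (ENNReal.ofReal_ne_top (r := c))
  refine ⟨continuous_const.mul <| hK.1.comp <|
    (hmul.comp continuous_fst).prodMk (hmul.comp continuous_snd), fun a b hb hba => ?_⟩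
  dsimp only
  rw [← ENNReal.ofReal_mul hc.le, ← ENNReal.ofReal_mul hc.le,
    hK.2 _ _ (by positivity) (by gcongr), restr_comp_ofReal_mul φ hc.le, H1_comp_mul _ hc.ne']
  field_simp

lemma IsH2Ext.comp_ofReal_mul {φ : ℝ≥0∞ → ℝ} {K : ℝ≥0∞ → ℝ} (hK : IsH2Ext φ K)
    {c : ℝ} (hc : 0 < c) :
    IsH2Ext (fun x => φ (ENNReal.ofReal c * x)) (fun x => c⁻¹ * K (ENNReal.ofReal c * x)) := by
  refine ⟨continuous_const.mul <| hK.1.comp <|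
    ENNReal.continuous_const_mul ENNReal.ofReal_ne_top, fun p hp => ?_⟩
  dsimp only
  rw [← ENNReal.ofReal_mul hc.le, hK.2 _ (by positivity), restr_comp_ofReal_mul φ hc.le,
    H2_comp_mul _ hc.ne']
  field_simp

def oneAddInv (z : ℝ≥0∞) : ℝ := ((1 + z)⁻¹).toReal

@[fun_prop]
lemma continuous_oneAddInv : Continuous oneAddInv :=
  ENNReal.continuousOn_toReal.comp_continuous (continuous_const_add (1 : ℝ≥0∞)).inv
    fun z => by simp

lemma oneAddInv_nonneg (z : ℝ≥0∞) : 0 ≤ oneAddInv z := ENNReal.toReal_nonneg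

lemma oneAddInv_le_one (z : ℝ≥0∞) : oneAddInv z ≤ 1 :=
  ENNReal.toReal_le_of_le_ofReal zero_le_one (by simp)

lemma oneAddInv_anti : Antitone oneAddInv := fun _ _ h =>
  ENNReal.toReal_mono (by simp) (ENNReal.inv_le_inv.2 (by gcongr))

@[simp] lemma oneAddInv_zero : oneAddInv 0 = 1 := by simp [oneAddInv]

@[simp] lemma oneAddInv_top : oneAddInv ∞ = 0 := by simp [oneAddInv]

lemma oneAddInv_ofReal {p : ℝ} (hp : 0 ≤ p) : oneAddInv (ENNReal.ofReal p) = 1 / (1 + p) := by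
  rw [oneAddInv, ← ENNReal.ofReal_one, ← ENNReal.ofReal_add zero_le_one hp,
    ← ENNReal.ofReal_inv_of_pos (by positivity), ENNReal.toReal_ofReal (by positivity), one_div]

def minDivMax (x y : ℝ≥0∞) : ℝ := (min x y / max x y).toReal

lemma minDivMax_nonneg (x y : ℝ≥0∞) : 0 ≤ minDivMax x y := ENNReal.toReal_nonneg

lemma minDivMax_le_one (x y : ℝ≥0∞) : minDivMax x y ≤ 1 :=
  ENNReal.toReal_le_of_le_ofReal zero_le_one (by simpa using ENNReal.div_le_of_le_mul (by simp))

lemma minDivMax_ofReal {a b : ℝ} (hb : 0 ≤ b) (hba : b ≤ a) :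
    minDivMax (ENNReal.ofReal a) (ENNReal.ofReal b) = b / a := by
  rw [minDivMax, min_eq_right (ENNReal.ofReal_le_ofReal hba),
    max_eq_left (ENNReal.ofReal_le_ofReal hba), ENNReal.toReal_div,
    ENNReal.toReal_ofReal hb, ENNReal.toReal_ofReal (hb.trans hba)]

lemma continuousAt_minDivMax {q : ℝ≥0∞ × ℝ≥0∞} (h0 : max q.1 q.2 ≠ 0) (htop : max q.1 q.2 ≠ ∞) :
    ContinuousAt (fun q : ℝ≥0∞ × ℝ≥0∞ => minDivMax q.1 q.2) q := by
  have hmin : min q.1 q.2 ≠ ∞ := ne_top_of_le_ne_top htop min_le_max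
  refine (ENNReal.tendsto_toReal (ENNReal.div_ne_top hmin h0)).comp ?_
  exact ENNReal.Tendsto.div continuous_min.continuousAt (.inr h0) continuous_max.continuousAt
    (.inr hmin)

lemma continuousAt_of_norm_le {α E : Type*} [TopologicalSpace α] [NormedAddGroup E]
    {f : α → E} {g : α → ℝ} {a : α} (hg : ContinuousAt g a) (hga : g a = 0)
    (hfg : ∀ x, ‖f x‖ ≤ g x) : ContinuousAt f a := by
  have hfa : f a = 0 := norm_le_zero_iff.1 (hga ▸ hfg a)
  rw [ContinuousAt, hfa]
  exact squeeze_zero_norm hfg (hga ▸ hg)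

def H1KernelFactor (x y : ℝ≥0∞) : ℝ :=
  oneAddInv (max x y - min x y) - oneAddInv (x + y)
    + minDivMax x y * (1 - oneAddInv (max x y - min x y)) * (1 - oneAddInv (x + y))

/-- `H¹_φ(p₁,p₂)/(p₁p₂)` for `φ(p) = 1/(1+p)`, rewritten through `1/(1+z)` and `min/max` so
that it extends continuously to `[0,∞]²`. -/
def H1Kernel (x y : ℝ≥0∞) : ℝ :=
  2 * oneAddInv (max x y) * H1KernelFactor x y - 4 * (1 - oneAddInv (min x y))

def H2Kernel (x : ℝ≥0∞) : ℝ := -4 * (1 - oneAddInv (2 * x)) * (1 - oneAddInv x)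

lemma abs_H1KernelFactor_le (x y : ℝ≥0∞) : |H1KernelFactor x y| ≤ 2 := by
  have := oneAddInv_nonneg (max x y - min x y)
  have := oneAddInv_le_one (max x y - min x y)
  have := oneAddInv_nonneg (x + y)
  have := oneAddInv_le_one (x + y)
  have hmm : minDivMax x y * (1 - oneAddInv (max x y - min x y)) * (1 - oneAddInv (x + y)) ≤ 1 :=
    mul_le_one₀ (mul_le_one₀ (minDivMax_le_one x y) (by linarith) (by linarith))
      (by linarith) (by linarith)
  have : 0 ≤ minDivMax x y * (1 - oneAddInv (max x y - min x y)) * (1 - oneAddInv (x + y)) :=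
    mul_nonneg (mul_nonneg (minDivMax_nonneg x y) (by linarith)) (by linarith)
  rw [abs_le, H1KernelFactor]
  constructor <;> linarith

lemma continuousAt_H1KernelFactor {q : ℝ≥0∞ × ℝ≥0∞} (htop : max q.1 q.2 ≠ ∞) :
    ContinuousAt (fun q : ℝ≥0∞ × ℝ≥0∞ => H1KernelFactor q.1 q.2) q := by
  have hdiff : ContinuousAt (fun q : ℝ≥0∞ × ℝ≥0∞ => oneAddInv (max q.1 q.2 - min q.1 q.2)) q :=
    continuous_oneAddInv.continuousAt.comp <|
      ENNReal.Tendsto.sub continuous_max.continuousAt continuous_min.continuousAt (.inl htop)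
  have hsum : Continuous fun q : ℝ≥0∞ × ℝ≥0∞ => oneAddInv (q.1 + q.2) :=
    continuous_oneAddInv.comp continuous_add
  suffices ContinuousAt (fun q : ℝ≥0∞ × ℝ≥0∞ => minDivMax q.1 q.2
      * (1 - oneAddInv (max q.1 q.2 - min q.1 q.2)) * (1 - oneAddInv (q.1 + q.2))) q from
    (hdiff.sub hsum.continuousAt).add this
  rcases eq_or_ne (max q.1 q.2) 0 with h0 | h0
  · -- at the origin `min/max` jumps, but it is multiplied by `1 - oneAddInv (x + y) → 0`
    have hg : ContinuousAt (fun p : ℝ≥0∞ × ℝ≥0∞ => 1 - oneAddInv (p.1 + p.2)) q :=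
      (continuous_const.sub hsum).continuousAt
    refine continuousAt_of_norm_le hg ?_ fun p => ?_
    · have hx : q.1 = 0 := le_antisymm (h0 ▸ le_max_left _ _) bot_le
      have hy : q.2 = 0 := le_antisymm (h0 ▸ le_max_right _ _) bot_le
      simp only [hx, hy, add_zero, oneAddInv_zero, sub_self]
    · have := oneAddInv_nonneg (max p.1 p.2 - min p.1 p.2)
      have := oneAddInv_le_one (max p.1 p.2 - min p.1 p.2)
      have := oneAddInv_le_one (p.1 + p.2)
      rw [Real.norm_eq_abs, abs_of_nonneg (mul_nonneg (mul_nonneg (minDivMax_nonneg _ _)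
        (by linarith)) (by linarith))]
      exact mul_le_of_le_one_left (by linarith)
        (mul_le_one₀ (minDivMax_le_one _ _) (by linarith) (by linarith))
  · exact ((continuousAt_minDivMax h0 htop).mul (continuousAt_const.sub hdiff)).mul
      (continuous_const.sub hsum).continuousAt

lemma continuous_H1Kernel : Continuous (Function.uncurry H1Kernel) := by
  have hmax : Continuous fun q : ℝ≥0∞ × ℝ≥0∞ => oneAddInv (max q.1 q.2) :=
    continuous_oneAddInv.comp continuous_max
  refine continuous_iff_continuousAt.2 fun q => ?_
  suffices ContinuousAt (fun q : ℝ≥0∞ × ℝ≥0∞ =>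
      2 * oneAddInv (max q.1 q.2) * H1KernelFactor q.1 q.2) q from
    this.sub (continuous_const.mul
      (continuous_const.sub (continuous_oneAddInv.comp continuous_min))).continuousAt
  rcases eq_or_ne (max q.1 q.2) ∞ with htop | htop
  · -- `max - min` jumps at `(∞, ∞)`, but the bounded factor is multiplied by `1/(1+max) → 0`
    have hg : ContinuousAt (fun p : ℝ≥0∞ × ℝ≥0∞ => 4 * oneAddInv (max p.1 p.2)) q :=
      (continuous_const.mul hmax).continuousAt
    refine continuousAt_of_norm_le hg (by simp only [htop, oneAddInv_top, mul_zero]) fun p => ?_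
    rw [Real.norm_eq_abs, abs_mul, abs_mul, abs_two, abs_of_nonneg (oneAddInv_nonneg _)]
    nlinarith [abs_H1KernelFactor_le p.1 p.2, oneAddInv_nonneg (max p.1 p.2)]
  · exact (continuous_const.mul hmax).continuousAt.mul (continuousAt_H1KernelFactor htop)

lemma H1Kernel_ofReal {a b : ℝ} (hb : 0 < b) (hba : b < a) :
    H1Kernel (ENNReal.ofReal a) (ENNReal.ofReal b) = H1 (restr oneAddInv) a b / (a * b) := by
  have ha : 0 < a := hb.trans hba
  have hle : ENNReal.ofReal b ≤ ENNReal.ofReal a := ENNReal.ofReal_le_ofReal hba.le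
  rw [H1Kernel, H1KernelFactor, max_eq_left hle, min_eq_right hle, ← ENNReal.ofReal_sub a hb.le,
    ← ENNReal.ofReal_add ha.le hb.le, minDivMax_ofReal hb.le hba.le, H1]
  simp only [restr]
  rw [oneAddInv_ofReal (p := a - b) (by linarith), oneAddInv_ofReal (p := a + b) (by linarith),
    oneAddInv_ofReal ha.le, oneAddInv_ofReal hb.le]
  have : 0 < 1 + (a - b) := by linarith
  field_simp
  ring

lemma H1_restr_oneAddInv_nonpos {a b : ℝ} (hb : 0 < b) (hba : b < a) :
    H1 (restr oneAddInv) a b ≤ 0 := by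
  have ha : 0 < a := hb.trans hba
  have hab : 0 < 1 + (a - b) := by linarith
  have key : (a ^ 2 - b ^ 2 + 2 * a) * (1 + b) ≤ 2 * a * (1 + a) * ((1 + a) ^ 2 - b ^ 2) := by
    nlinarith [mul_pos hb ha, sq_nonneg (a - b), mul_pos ha (by linarith : (0 : ℝ) < 1 + a),
      mul_nonneg (mul_nonneg hb.le hb.le) ha.le]
  have hval : H1 (restr oneAddInv) a b
      = 2 * b ^ 2 * ((a ^ 2 - b ^ 2 + 2 * a) * (1 + b) - 2 * a * (1 + a) * ((1 + a) ^ 2 - b ^ 2))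
          / ((1 + a) * (1 + (a + b)) * (1 + (a - b)) * (1 + b)) := by
    simp only [H1, restr]
    rw [oneAddInv_ofReal (p := a + b) (by linarith), oneAddInv_ofReal ha.le,
      oneAddInv_ofReal hb.le, oneAddInv_ofReal (p := a - b) (by linarith)]
    field_simp
    ring
  rw [hval]
  exact div_nonpos_of_nonpos_of_nonneg (by nlinarith [sq_nonneg b]) (by positivity)

lemma H1Kernel_nonpos {x y : ℝ≥0∞} (hyx : y < x) : H1Kernel x y ≤ 0 := by
  have hle := hyx.le
  rcases eq_or_ne x ∞ with rfl | hx
  · simp only [H1Kernel, max_eq_left hle, min_eq_right hle, oneAddInv_top]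
    linarith [oneAddInv_le_one y]
  rcases eq_or_ne y 0 with rfl | hy
  · simp [H1Kernel, H1KernelFactor, minDivMax]
  have hy' : y ≠ ∞ := hyx.ne_top
  have hb : 0 < y.toReal := ENNReal.toReal_pos hy hy'
  have hba : y.toReal < x.toReal := (ENNReal.toReal_lt_toReal hy' hx).2 hyx
  rw [← ENNReal.ofReal_toReal hx, ← ENNReal.ofReal_toReal hy', H1Kernel_ofReal hb hba]
  exact div_nonpos_of_nonpos_of_nonneg (H1_restr_oneAddInv_nonpos hb hba) (by positivity)

lemma isH1Ext_H1Kernel : IsH1Ext oneAddInv H1Kernel :=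
  ⟨continuous_H1Kernel, fun _ _ => H1Kernel_ofReal⟩

lemma H2Kernel_nonpos (x : ℝ≥0∞) : H2Kernel x ≤ 0 := by
  have := oneAddInv_le_one (2 * x)
  have := oneAddInv_le_one x
  rw [H2Kernel, neg_mul, neg_mul, neg_nonpos]
  positivity

lemma isH2Ext_H2Kernel : IsH2Ext oneAddInv H2Kernel := by
  refine ⟨by unfold H2Kernel; fun_prop (disch := simp), fun p hp => ?_⟩
  simp only [H2Kernel, H2, restr]
  rw [← ENNReal.ofReal_ofNat 2, ← ENNReal.ofReal_mul zero_le_two, ← two_mul,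
    oneAddInv_ofReal (by positivity), oneAddInv_ofReal hp.le]
  field_simp
  ring

lemma collInt_nonpos (μ : Measure ℝ≥0∞) {K₁ : ℝ≥0∞ → ℝ≥0∞ → ℝ} {K₂ : ℝ≥0∞ → ℝ}
    (hK₁ : ∀ x y, y < x → K₁ x y ≤ 0) (hK₂ : ∀ x, K₂ x ≤ 0) : collInt μ K₁ K₂ ≤ 0 := by
  have h₁ : ∫ p₁, (∫ p₂, (if p₂ < p₁ then K₁ p₁ p₂ else 0) ∂μ) ∂μ ≤ 0 :=
    integral_nonpos fun x => integral_nonpos fun y => by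
      split_ifs with h
      exacts [hK₁ x y h, le_rfl]
  have h₂ : ∫ p₁, (∫ p₂, (if p₁ = p₂ then K₂ p₁ else 0) ∂μ) ∂μ ≤ 0 :=
    integral_nonpos fun x => integral_nonpos fun y => by
      split_ifs
      exacts [hK₂ x, le_rfl]
  rw [collInt]
  linarith

lemma IsWeakSolution.integral_le_integral_init {ν : ℝ → Measure ℝ≥0∞} {ν₀ : Measure ℝ≥0∞}
    (hsol : IsWeakSolution ν ν₀) {φ : C(ℝ≥0∞, ℝ)} {K₁ : ℝ≥0∞ → ℝ≥0∞ → ℝ} {K₂ : ℝ≥0∞ → ℝ}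
    (h₁ : IsH1Ext φ K₁) (h₂ : IsH2Ext φ K₂) (hK₁ : ∀ x y, y < x → K₁ x y ≤ 0)
    (hK₂ : ∀ x, K₂ x ≤ 0) {t : ℝ} (ht : 0 ≤ t) :
    ∫ p, φ p ∂ν t ≤ ∫ p, φ p ∂ν₀ := by
  have h := hsol.eqn (fun _ => φ) 0 (fun s => hasDerivAt_const s φ) continuous_const t ht
    (fun _ => K₁) (fun _ => K₂) (fun _ _ => h₁) (fun _ _ => h₂)
  have hcoll : ∫ s in (0 : ℝ)..t, ((∫ _, (0 : ℝ) ∂ν s) + collInt (ν s) K₁ K₂) ≤ 0 := by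
    rw [intervalIntegral.integral_of_le ht]
    exact integral_nonpos fun s => by simpa using collInt_nonpos (ν s) hK₁ hK₂
  simp only [Pi.zero_apply, ContinuousMap.zero_apply, hsol.init] at h
  linarith

def scaledOneAddInv (c : ℝ) : C(ℝ≥0∞, ℝ) :=
  ⟨fun x => oneAddInv (ENNReal.ofReal c * x), by fun_prop (disch := simp)⟩

lemma scaledOneAddInv_nonneg (c : ℝ) (x : ℝ≥0∞) : 0 ≤ scaledOneAddInv c x := oneAddInv_nonneg _

lemma scaledOneAddInv_le_one (c : ℝ) (x : ℝ≥0∞) : scaledOneAddInv c x ≤ 1 := oneAddInv_le_one _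

lemma integrable_scaledOneAddInv (μ : Measure ℝ≥0∞) [IsFiniteMeasure μ] (c : ℝ) :
    Integrable (scaledOneAddInv c) μ :=
  (integrable_const 1).mono' (scaledOneAddInv c).continuous.aestronglyMeasurable <| ae_of_all _
    fun x => by simpa [abs_of_nonneg (scaledOneAddInv_nonneg c x)] using scaledOneAddInv_le_one c x

lemma IsWeakSolution.integral_scaledOneAddInv_le {ν : ℝ → Measure ℝ≥0∞} {ν₀ : Measure ℝ≥0∞}
    (hsol : IsWeakSolution ν ν₀) {c : ℝ} (hc : 0 < c) {t : ℝ} (ht : 0 ≤ t) :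
    ∫ p, scaledOneAddInv c p ∂ν t ≤ ∫ p, scaledOneAddInv c p ∂ν₀ := by
  have hc' : ENNReal.ofReal c ≠ 0 := by simpa using hc
  refine hsol.integral_le_integral_init (isH1Ext_H1Kernel.comp_ofReal_mul hc)
    (isH2Ext_H2Kernel.comp_ofReal_mul hc) (fun x y hyx => ?_)
    (fun x => mul_nonpos_of_nonneg_of_nonpos (by positivity) (H2Kernel_nonpos _)) ht
  exact mul_nonpos_of_nonneg_of_nonpos (by positivity)
    (H1Kernel_nonpos ((ENNReal.mul_lt_mul_iff_right hc' ENNReal.ofReal_ne_top).2 hyx))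

lemma measureReal_Iio_le_two_mul_integral (μ : Measure ℝ≥0∞) [IsFiniteMeasure μ] {c : ℝ}
    (hc : 0 < c) :
    μ.real (Set.Iio (ENNReal.ofReal c⁻¹)) ≤ 2 * ∫ p, scaledOneAddInv c p ∂μ := by
  have hsub : Set.Iio (ENNReal.ofReal c⁻¹) ⊆ {x | 1 / 2 ≤ scaledOneAddInv c x} := fun x hx => by
    have hcx : ENNReal.ofReal c * x ≤ 1 := by
      calc ENNReal.ofReal c * x ≤ ENNReal.ofReal c * ENNReal.ofReal c⁻¹ := by gcongr; exact hx.le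
        _ = 1 := by rw [← ENNReal.ofReal_mul hc.le, mul_inv_cancel₀ hc.ne', ENNReal.ofReal_one]
    calc (1 : ℝ) / 2 = oneAddInv (ENNReal.ofReal 1) := by rw [oneAddInv_ofReal zero_le_one]; norm_num
      _ ≤ scaledOneAddInv c x := oneAddInv_anti (ENNReal.ofReal_one ▸ hcx)
  have := mul_meas_ge_le_integral_of_nonneg (ae_of_all _ (scaledOneAddInv_nonneg c))
    (integrable_scaledOneAddInv μ c) (1 / 2)
  linarith [measureReal_mono hsub (μ := μ)]

lemma tendsto_scaledOneAddInv (x : ℝ≥0∞) :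
    Tendsto (fun c => scaledOneAddInv c x) atTop (𝓝 (({0} : Set ℝ≥0∞).indicator 1 x)) := by
  rcases eq_or_ne x 0 with rfl | hx
  · simp [scaledOneAddInv]
  rw [Set.indicator_of_notMem (Set.notMem_singleton_iff.2 hx), ← oneAddInv_top,
    ← ENNReal.top_mul hx]
  exact continuous_oneAddInv.continuousAt.tendsto.comp
    (ENNReal.Tendsto.mul_const ENNReal.tendsto_ofReal_atTop (.inl ENNReal.top_ne_zero))

lemma tendsto_integral_scaledOneAddInv (μ : Measure ℝ≥0∞) [IsFiniteMeasure μ] :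
    Tendsto (fun c => ∫ p, scaledOneAddInv c p ∂μ) atTop (𝓝 (μ.real {0})) := by
  rw [← integral_indicator_one (measurableSet_singleton 0)]
  refine tendsto_integral_filter_of_dominated_convergence (fun _ => 1)
    (.of_forall fun c => (scaledOneAddInv c).continuous.aestronglyMeasurable)
    (.of_forall fun c => ae_of_all _ fun x => ?_) (integrable_const 1)
    (ae_of_all _ tendsto_scaledOneAddInv)
  simpa [abs_of_nonneg (scaledOneAddInv_nonneg c x)] using scaledOneAddInv_le_one c x

theorem statement13_general (ν₀ : Measure ℝ≥0∞)
    (ν : ℝ → Measure ℝ≥0∞) (hsol : IsWeakSolution ν ν₀) (hnt : NontrivialSol ν₀)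
    (h0 : ν₀ {0} = 0) (ε : ℝ) (hε₀ : 0 < ε) :
    ∃ Rε : ℝ, 0 < Rε ∧ ∀ t : ℝ, 0 ≤ t →
      ν t (Set.Iio (ENNReal.ofReal Rε)) ≤ ENNReal.ofReal ε * ν₀ Set.univ := by
  have : IsFiniteMeasure ν₀ := hsol.init ▸ hsol.finite 0
  have hE : 0 < ν₀.real Set.univ :=
    ENNReal.toReal_pos (hnt.trans_le (measure_mono (Set.subset_univ _))).ne' (measure_ne_top _ _)
  have hlim := (tendsto_integral_scaledOneAddInv ν₀).const_mul 2
  rw [measureReal_def, h0, ENNReal.toReal_zero, mul_zero] at hlim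
  obtain ⟨c, hcε, hc⟩ := ((hlim.eventually (gt_mem_nhds (mul_pos hε₀ hE))).and
    (eventually_gt_atTop 0)).exists
  refine ⟨c⁻¹, inv_pos.2 hc, fun t ht => ?_⟩
  have := hsol.finite t
  rw [← ofReal_measureReal, ← ofReal_measureReal, ← ENNReal.ofReal_mul hε₀.le]
  refine ENNReal.ofReal_le_ofReal ?_
  linarith [measureReal_Iio_le_two_mul_integral (ν t) hc, hsol.integral_scaledOneAddInv_le hc ht]

/-- for every nontrivial weak solution with `ν₀({0}) = 0` and total energy
`E = ν₀([0,∞])`, for every `ε ∈ (0,1)` there exists `Rε > 0` with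
`ν(t)([0,Rε)) ≤ ε·E` for all `t ≥ 0`. -/
theorem statement13 (ν₀ : Measure ℝ≥0∞) [IsFiniteMeasure ν₀]
    (ν : ℝ → Measure ℝ≥0∞) (hsol : IsWeakSolution ν ν₀) (hnt : NontrivialSol ν₀)
    (h0 : ν₀ {0} = 0) (ε : ℝ) (hε₀ : 0 < ε) (hε₁ : ε < 1) :
    ∃ Rε : ℝ, 0 < Rε ∧ ∀ t : ℝ, 0 ≤ t →
      ν t (Set.Iio (ENNReal.ofReal Rε)) ≤ ENNReal.ofReal ε * ν₀ Set.univ :=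
  statement13_general ν₀ ν hsol hnt h0 ε hε₀
end
end
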